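/- arXiv:2206.02471 — 6 statements merged into one kernel-verified Lean document; each statement's English description precedes it below -/
import Mathlib

section
/- Let ν be a fully supported, non-atomic Borel probability measure on [0,1]. For any function f : [0,1] → ℝ of bounded variation, define ‖f‖_{BV_ν} := inf{ var(f̃) : f̃ = f ν-a.e. } + ν(|f|) and ‖f‖_{BV_1} := inf{ var(f̃) : f̃ = f Leb-a.e. } + ∫|f| dLeb. Then (1/2)‖f‖_{BV_1} ≤ ‖f‖_{BV_ν} ≤ 2‖f‖_{BV_1}. -/
/-!
Let `C` be the set of points of `[0,1]` at which `f` is continuous within `[0,1]`; its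
complement in `[0,1]` is countable. For any non-atomic measure charging every subinterval, the
infimum in the BV norm is the variation of `f` on `C`, whatever the measure: near each `x ∈ C`,
every a.e. representative takes values close to `f x`, so its variation is at least that of `f`
on `C`; conversely, redefining `f` off `C` by cluster values of `f` along `C` gives a
representative whose variation is at most that one. For such a representative `g` of variation
`V`, any two values of `|g|` on `[0,1]` differ by at most `V`, so the integral terms for two
probability measures differ by at most `V`, which is bounded by the common infimum. Hence each
norm is at most twice the other.
-/

open MeasureTheory Set

/-- The BV norm with respect to a measure `ν` on `[0,1]`:
`inf { var(f̃) : f̃ = f ν-a.e., f̃ of bounded variation } + ν(|f|)`. -/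
noncomputable def bvNormWrt (ν : Measure ℝ) (f : ℝ → ℝ) : ℝ :=
  sInf {v : ℝ | ∃ g : ℝ → ℝ, BoundedVariationOn g (Set.Icc 0 1) ∧ g =ᵐ[ν] f ∧
      v = (eVariationOn g (Set.Icc 0 1)).toReal} +
    ∫ x, |f x| ∂ν

open Filter Topology

theorem mapClusterPt_iff_mem_closure_graph {α E : Type*} [TopologicalSpace α]
    [TopologicalSpace E] {f : α → E} {s : Set α} {x : α} {y : E} :
    MapClusterPt y (𝓝[s] x) f ↔ (x, y) ∈ closure ((fun z => (z, f z)) '' s) := by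
  rw [mapClusterPt_iff_frequently, mem_closure_iff_nhds]
  constructor
  · intro h W hW
    obtain ⟨K, hK, T, hT, hKT⟩ := mem_nhds_prod_iff.1 hW
    obtain ⟨z, hzT, hzs, hzK⟩ :=
      ((h T hT).and_eventually (inter_mem_nhdsWithin s hK)).exists
    exact ⟨(z, f z), hKT ⟨hzK, hzT⟩, z, hzs, rfl⟩
  · intro h T hT
    rw [Filter.frequently_iff]
    intro U hU
    obtain ⟨K, hK, hKU⟩ := mem_nhdsWithin_iff_exists_mem_nhds_inter.1 hU
    obtain ⟨_, hzKT, z, hzs, rfl⟩ := h _ (prod_mem_nhds hK hT)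
    exact ⟨z, hKU ⟨hzKT.1, hzs⟩, hzKT.2⟩

theorem eVariationOn_le_of_forall_mapClusterPt {α E : Type*} [LinearOrder α]
    [TopologicalSpace α] [OrderTopology α] [PseudoEMetricSpace E] {f g : α → E} {s t : Set α}
    (h : ∀ x ∈ t, MapClusterPt (g x) (𝓝[s] x) f) : eVariationOn g t ≤ eVariationOn f s := by
  rw [eVariationOn.eVariationOn_eq_strictMonoOn]
  refine iSup_le fun ⟨n, u, hu, hut⟩ => le_of_forall_lt fun c hc => ?_
  set graph := (fun z => (z, f z)) '' s
  set p : ℕ → α × E := fun i => (u i, g (u i))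
  have hp : p ∈ closure ((Iic n).pi fun _ => graph) := by
    rw [closure_pi_set]
    exact fun i hi => mapClusterPt_iff_mem_closure_graph.1 (h _ (hut i hi))
  -- `p` is approximated by tuples of graph points; near `p`, both the strict order of the
  -- abscissae and the lower bound `c` on the sum of jumps persist.
  have hsum : ∀ᶠ q in 𝓝 p, c < ∑ i ∈ Finset.range n, edist (q (i + 1)).2 (q i).2 :=
    (continuous_finsetSum _ fun i _ => by fun_prop).continuousAt.eventually (lt_mem_nhds hc)
  have hord : ∀ᶠ q in 𝓝 p, StrictMonoOn (fun i => (q i).1) (Iic n) := by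
    have : ∀ i ∈ Iic n, ∀ᶠ q in 𝓝 p, ∀ j ∈ Iic n, i < j → (q i).1 < (q j).1 := by
      refine fun i hi => (eventually_all_finite (finite_Iic n)).2 fun j hj => ?_
      by_cases hij : i < j
      · have hopen : IsOpen {q : ℕ → α × E | (q i).1 < (q j).1} :=
          isOpen_lt (by fun_prop) (by fun_prop)
        exact eventually_of_mem (hopen.mem_nhds (hu hi hj hij)) fun q hq _ => hq
      · exact Eventually.of_forall fun q h => absurd h hij
    exact ((eventually_all_finite (finite_Iic n)).2 this).mono fun q hq i hi j hj => hq i hi j hj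
  obtain ⟨q, hq, hqc, hqu⟩ :=
    ((mem_closure_iff_frequently.1 hp).and_eventually (hsum.and hord)).exists
  have : Nonempty α := ⟨u 0⟩
  choose! v hvs hv using fun i (hi : i ∈ Iic n) => hq i hi
  calc c < ∑ i ∈ Finset.range n, edist (q (i + 1)).2 (q i).2 := hqc
    _ = ∑ i ∈ Finset.range n, edist (f (v (i + 1))) (f (v i)) := by
      refine Finset.sum_congr rfl fun i hi => ?_
      have := Finset.mem_range.1 hi
      rw [← hv i (by rw [mem_Iic]; omega), ← hv (i + 1) (by rw [mem_Iic]; omega)]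
    _ ≤ eVariationOn f s := by
      refine eVariationOn.sum_le_of_monotoneOn_Iic (StrictMonoOn.monotoneOn ?_) hvs
      intro i hi j hj hij
      simpa only [← hv i hi, ← hv j hj] using hqu hi hj hij

theorem BoundedVariationOn.isBounded_image {α E : Type*} [LinearOrder α] [PseudoMetricSpace E]
    {f : α → E} {s : Set α} (hf : BoundedVariationOn f s) : Bornology.IsBounded (f '' s) :=
  Metric.isBounded_iff.2 ⟨_, by
    rintro _ ⟨x, hx, rfl⟩ _ ⟨y, hy, rfl⟩
    exact hf.dist_le hx hy⟩

theorem BoundedVariationOn.exists_eqOn_compl_eVariationOn_le {α E : Type*} [LinearOrder α]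
    [TopologicalSpace α] [OrderTopology α] [PseudoMetricSpace E] [ProperSpace E] {f : α → E}
    {s C : Set α} (hsC : s ⊆ closure C) (hf : BoundedVariationOn f C) :
    ∃ g : α → E, EqOn g f (s \ C)ᶜ ∧ eVariationOn g s ≤ eVariationOn f C := by
  have hclus : ∀ x ∈ s \ C, ∃ y, MapClusterPt y (𝓝[C] x) f := by
    intro x hx
    have := mem_closure_iff_nhdsWithin_neBot.1 (hsC hx.1)
    obtain ⟨y, -, hy⟩ := hf.isBounded_image.isCompact_closure.exists_mapClusterPt
      (f := 𝓝[C] x) (tendsto_principal.2 (eventually_mem_nhdsWithin.mono fun z hz =>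
        subset_closure (mem_image_of_mem f hz)))
    exact ⟨y, hy⟩
  choose y hy using hclus
  classical
  refine ⟨fun x => if hx : x ∈ s \ C then y x hx else f x, fun x hx => dif_neg hx,
    eVariationOn_le_of_forall_mapClusterPt fun x hxs => ?_⟩
  by_cases hx : x ∈ s \ C
  · simpa only [dif_pos hx] using hy x hx
  · have hxC : x ∈ C := by_contra fun h => hx ⟨hxs, h⟩
    simp only [dif_neg hx]
    exact (ClusterPt.of_le_nhds (pure_le_nhds (f x))).mono
      (map_mono (pure_le_nhdsWithin hxC))

theorem LocallyBoundedVariationOn.countable_not_continuousWithinAt {α : Type*} [LinearOrder α]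
    [TopologicalSpace α] [OrderTopology α] [SecondCountableTopology α] {f : α → ℝ} {s : Set α}
    (hf : LocallyBoundedVariationOn f s) : {x ∈ s | ¬ContinuousWithinAt f s x}.Countable := by
  obtain ⟨p, q, hp, hq, rfl⟩ := hf.exists_monotoneOn_sub_monotoneOn
  refine (hp.countable_not_continuousWithinAt.union hq.countable_not_continuousWithinAt).mono ?_
  rintro x ⟨hx, hpq⟩
  by_contra h
  simp only [mem_union, mem_ofPred_eq, not_or, not_and, not_not] at h
  exact hpq ((h.1 hx).sub (h.2 hx))

theorem Icc_subset_closure_of_countable_diff {a b : ℝ} (hab : a < b) {C : Set ℝ}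
    (hC : (Icc a b \ C).Countable) : Icc a b ⊆ closure C := by
  rw [← closure_Ioo hab.ne]
  refine closure_minimal (((hC.dense_compl ℝ).open_subset_closure_inter isOpen_Ioo).trans
    (closure_mono ?_)) isClosed_closure
  rintro x ⟨hx, hxC⟩
  by_contra h
  exact hxC ⟨Ioo_subset_Icc_self hx, h⟩

theorem frequently_nhdsWithin_Icc_of_ae {μ : Measure ℝ} {a b : ℝ} (hab : a < b)
    (hfull : ∀ c d, a ≤ c → c < d → d ≤ b → 0 < μ (Icc c d)) {p : ℝ → Prop}
    (hp : ∀ᵐ y ∂μ, p y) {x : ℝ} (hx : x ∈ Icc a b) : ∃ᶠ y in 𝓝[Icc a b] x, p y := by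
  rw [Filter.frequently_iff]
  intro U hU
  obtain ⟨ε, hε, hεU⟩ := Metric.mem_nhdsWithin_iff.1 hU
  have hcd : max a (x - ε / 2) < min b (x + ε / 2) :=
    max_lt (lt_min hab (by linarith [hx.1])) (lt_min (by linarith [hx.2]) (by linarith))
  have hsub : Icc (max a (x - ε / 2)) (min b (x + ε / 2)) ⊆ U := by
    rintro y ⟨hy₁, hy₂⟩
    rw [max_le_iff] at hy₁
    rw [le_min_iff] at hy₂
    refine hεU ⟨?_, hy₁.1, hy₂.1⟩
    rw [Metric.mem_ball, Real.dist_eq, abs_lt]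
    constructor <;> linarith
  obtain ⟨y, hy, hpy⟩ := Measure.exists_mem_of_measure_ne_zero_of_ae
    (hfull _ _ (le_max_left _ _) hcd (min_le_left _ _)).ne' (ae_restrict_of_ae hp)
  exact ⟨y, hsub hy, hpy⟩

theorem eVariationOn_le_of_ae_eq {E : Type*} [PseudoEMetricSpace E] {μ : Measure ℝ} {a b : ℝ}
    (hab : a < b) (hfull : ∀ c d, a ≤ c → c < d → d ≤ b → 0 < μ (Icc c d)) {f g : ℝ → E}
    {C : Set ℝ} (hC : ∀ x ∈ C, x ∈ Icc a b ∧ ContinuousWithinAt f (Icc a b) x)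
    (hg : g =ᵐ[μ] f) : eVariationOn f C ≤ eVariationOn g (Icc a b) := by
  refine eVariationOn_le_of_forall_mapClusterPt fun x hx => mapClusterPt_iff_frequently.2 ?_
  intro T hT
  exact ((frequently_nhdsWithin_Icc_of_ae hab hfull hg (hC x hx).1).and_eventually
    ((hC x hx).2 hT)).mono fun y hy => hy.1 ▸ hy.2

theorem BoundedVariationOn.integrable {f : ℝ → ℝ} {s : Set ℝ} (hf : BoundedVariationOn f s)
    (hs : MeasurableSet s) {μ : Measure ℝ} [IsFiniteMeasure μ] (hμ : μ sᶜ = 0) :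
    Integrable f μ := by
  have hae : ∀ᵐ x ∂μ, x ∈ s := mem_ae_iff.2 hμ
  have hμs : μ.restrict s = μ := Measure.restrict_eq_self_of_ae_mem hae
  obtain ⟨p, q, hp, hq, hpq⟩ := hf.locallyBoundedVariationOn.exists_monotoneOn_sub_monotoneOn
  have hmeas : AEMeasurable f μ := by
    rw [hpq, ← hμs]
    exact (aemeasurable_restrict_of_monotoneOn hs hp).sub
      (aemeasurable_restrict_of_monotoneOn hs hq)
  obtain ⟨K, hK⟩ := hf.isBounded_image.exists_norm_le
  exact Integrable.of_bound hmeas.aestronglyMeasurable K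
    (hae.mono fun x hx => hK _ (mem_image_of_mem f hx))

theorem integral_le_integral_add_of_forall_sub_le {α : Type*} [MeasurableSpace α]
    {μ₁ μ₂ : Measure α} [IsProbabilityMeasure μ₁] [IsProbabilityMeasure μ₂] {F : α → ℝ}
    {s : Set α} {V : ℝ} (h₁ : μ₁ sᶜ = 0) (h₂ : μ₂ sᶜ = 0) (hF₁ : Integrable F μ₁)
    (hF₂ : Integrable F μ₂) (hV : ∀ x ∈ s, ∀ y ∈ s, F x - F y ≤ V) :
    ∫ x, F x ∂μ₁ ≤ ∫ x, F x ∂μ₂ + V := by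
  obtain ⟨x, hx, hx₁⟩ := exists_notMem_null_integral_le hF₁ h₁
  obtain ⟨y, hy, hy₂⟩ := exists_notMem_null_le_integral hF₂ h₂
  linarith [hV x (not_not.1 hx) y (not_not.1 hy)]

theorem ae_eq_of_countable_ne {α β : Type*} [MeasurableSpace α] {μ : Measure α}
    [NullSingletonClass μ] {f g : α → β} (h : {x | f x ≠ g x}.Countable) : f =ᵐ[μ] g :=
  (h.ae_notMem μ).mono fun _ hx => of_not_not hx

theorem BoundedVariationOn.exists_countable_ne_eVariationOn_le {f : ℝ → ℝ} {a b : ℝ}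
    (hab : a < b) (hf : BoundedVariationOn f (Icc a b)) :
    ∃ g : ℝ → ℝ, {x | g x ≠ f x}.Countable ∧
      eVariationOn g (Icc a b) ≤
        eVariationOn f {x ∈ Icc a b | ContinuousWithinAt f (Icc a b) x} := by
  set C := {x ∈ Icc a b | ContinuousWithinAt f (Icc a b) x}
  have hD := hf.locallyBoundedVariationOn.countable_not_continuousWithinAt
  have hdense : Icc a b ⊆ closure C := Icc_subset_closure_of_countable_diff hab
    (hD.mono fun x hx => by exact ⟨hx.1, fun h => hx.2 ⟨hx.1, h⟩⟩)
  obtain ⟨g, hgf, hg⟩ := (hf.mono (sep_subset _ _)).exists_eqOn_compl_eVariationOn_le hdense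
  refine ⟨g, hD.mono fun x hx => ?_, hg⟩
  by_contra h
  exact hx (hgf fun hx' => h ⟨hx'.1, fun hc => hx'.2 ⟨hx'.1, hc⟩⟩)

theorem sInf_eVariationOn_ae_eq {μ : Measure ℝ} [NullSingletonClass μ]
    (hfull : ∀ a b : ℝ, 0 ≤ a → a < b → b ≤ 1 → 0 < μ (Icc a b)) {f : ℝ → ℝ}
    (hf : BoundedVariationOn f (Icc 0 1)) :
    sInf {v : ℝ | ∃ g : ℝ → ℝ, BoundedVariationOn g (Icc 0 1) ∧ g =ᵐ[μ] f ∧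
      v = (eVariationOn g (Icc 0 1)).toReal} =
      (eVariationOn f {x ∈ Icc 0 1 | ContinuousWithinAt f (Icc 0 1) x}).toReal := by
  have hfC := hf.mono (sep_subset (Icc 0 1) fun x => ContinuousWithinAt f (Icc 0 1) x)
  obtain ⟨g, hgf, hg⟩ := hf.exists_countable_ne_eVariationOn_le zero_lt_one
  have hmem : (eVariationOn g (Icc 0 1)).toReal ∈ {v : ℝ | ∃ g : ℝ → ℝ,
      BoundedVariationOn g (Icc 0 1) ∧ g =ᵐ[μ] f ∧ v = (eVariationOn g (Icc 0 1)).toReal} :=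
    ⟨g, ne_top_of_le_ne_top hfC hg, ae_eq_of_countable_ne hgf, rfl⟩
  refine le_antisymm (csInf_le_of_le ⟨0, ?_⟩ hmem (ENNReal.toReal_mono hfC hg))
    (le_csInf ⟨_, hmem⟩ ?_)
  · rintro _ ⟨_, _, _, rfl⟩
    exact ENNReal.toReal_nonneg
  · rintro _ ⟨g', hg', hg'f, rfl⟩
    exact ENNReal.toReal_mono hg'
      (eVariationOn_le_of_ae_eq zero_lt_one hfull (fun x hx => hx) hg'f)

theorem bvNormWrt_le_two_mul_bvNormWrt {μ₁ μ₂ : Measure ℝ} [IsProbabilityMeasure μ₁]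
    [IsProbabilityMeasure μ₂] [NullSingletonClass μ₁] [NullSingletonClass μ₂]
    (h₁s : μ₁ (Icc 0 1)ᶜ = 0) (h₂s : μ₂ (Icc 0 1)ᶜ = 0)
    (h₁f : ∀ a b : ℝ, 0 ≤ a → a < b → b ≤ 1 → 0 < μ₁ (Icc a b))
    (h₂f : ∀ a b : ℝ, 0 ≤ a → a < b → b ≤ 1 → 0 < μ₂ (Icc a b))
    {f : ℝ → ℝ} (hf : BoundedVariationOn f (Icc 0 1)) :
    bvNormWrt μ₁ f ≤ 2 * bvNormWrt μ₂ f := by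
  set M := (eVariationOn f {x ∈ Icc 0 1 | ContinuousWithinAt f (Icc 0 1) x}).toReal
  have hfC := hf.mono (sep_subset (Icc 0 1) fun x => ContinuousWithinAt f (Icc 0 1) x)
  obtain ⟨g, hgf, hg⟩ := hf.exists_countable_ne_eVariationOn_le zero_lt_one
  have hgbv : BoundedVariationOn g (Icc 0 1) := ne_top_of_le_ne_top hfC hg
  have hnorm : ∀ (μ : Measure ℝ) [NullSingletonClass μ],
      (∀ a b : ℝ, 0 ≤ a → a < b → b ≤ 1 → 0 < μ (Icc a b)) →
      bvNormWrt μ f = M + ∫ x, |g x| ∂μ := by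
    intro μ _ hfull
    rw [bvNormWrt, sInf_eVariationOn_ae_eq hfull hf]
    exact congrArg _ (integral_congr_ae ((ae_eq_of_countable_ne hgf).mono fun x hx => by
      simp only [hx]))
  have hint := integral_le_integral_add_of_forall_sub_le h₁s h₂s
    (hgbv.integrable measurableSet_Icc h₁s).abs (hgbv.integrable measurableSet_Icc h₂s).abs
    fun x hx y hy => (abs_sub_abs_le_abs_sub _ _).trans (hgbv.dist_le hx hy)
  have hgM : (eVariationOn g (Icc 0 1)).toReal ≤ M := ENNReal.toReal_mono hfC hg
  have hM : 0 ≤ M := ENNReal.toReal_nonneg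
  have hI : 0 ≤ ∫ x, |g x| ∂μ₂ := integral_nonneg fun x => abs_nonneg (g x)
  rw [hnorm μ₁ h₁f, hnorm μ₂ h₂f]
  linarith

/-- For a fully supported, non-atomic probability measure `ν` on `[0,1]` and a function `f`
of bounded variation, `(1/2)‖f‖_{BV₁} ≤ ‖f‖_{BV_ν} ≤ 2‖f‖_{BV₁}`, where `BV₁` is the BV
norm with respect to Lebesgue measure on `[0,1]`. -/
theorem stmt1 (ν : Measure ℝ) [IsProbabilityMeasure ν]
    (hsupp : ν (Set.Icc (0:ℝ) 1)ᶜ = 0)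
    (hfull : ∀ a b : ℝ, 0 ≤ a → a < b → b ≤ 1 → 0 < ν (Set.Icc a b))
    (hatom : ∀ x : ℝ, ν {x} = 0)
    (f : ℝ → ℝ) (hf : BoundedVariationOn f (Set.Icc 0 1)) :
    (1 / 2) * bvNormWrt (volume.restrict (Set.Icc 0 1)) f ≤ bvNormWrt ν f ∧
      bvNormWrt ν f ≤ 2 * bvNormWrt (volume.restrict (Set.Icc 0 1)) f := by
  have : NullSingletonClass ν := ⟨hatom⟩
  have : IsProbabilityMeasure (volume.restrict (Icc (0 : ℝ) 1)) := ⟨by simp⟩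
  have hsuppLeb : volume.restrict (Icc (0 : ℝ) 1) (Icc 0 1)ᶜ = 0 := by simp
  have hfullLeb : ∀ a b : ℝ, 0 ≤ a → a < b → b ≤ 1 →
      0 < volume.restrict (Icc (0 : ℝ) 1) (Icc a b) := fun a b ha hab hb => by
    rw [Measure.restrict_apply measurableSet_Icc, inter_eq_left.2 (Icc_subset_Icc ha hb)]
    simpa using hab
  exact ⟨by linarith [bvNormWrt_le_two_mul_bvNormWrt hsuppLeb hsupp hfullLeb hfull hf],
    bvNormWrt_le_two_mul_bvNormWrt hsupp hsuppLeb hfull hfullLeb hf⟩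
end

section
/- Let g : [0,1] → ℝ and f : [0,1] → ℝ be of bounded variation, let Z ⊆ [0,1] be an interval, let ψ : J → Z be a monotone bijection from an interval J ⊆ [0,1], and let ν be a probability measure on [0,1] with ν(Z) > 0. Then var( 1_J · ((f·g) ∘ ψ) ) ≤ 9 sup_Z|g| · var_Z(f) + 8 sup_Z|g| · ν(|f|·1_Z)/ν(Z), provided var_Z(g) ≤ 2 sup_Z|g|. -/
/-!
Splitting the line at a point of `J`, multiplying by `1_J` adds at most one jump on each side,
each bounded by `sup_J |F|`; hence `var (1_J F) ≤ var_J F + 2 sup_J |F|`. For `F = (f g) ∘ ψ`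
with `ψ` monotone onto `Z`, `var_J F = var_Z (f g) ≤ sup_Z |g| var_Z f + sup_Z |f| var_Z g`.
Since `|f|` exceeds its minimum on `Z` by at most `var_Z f` and that minimum lies below the
`ν`-mean of `|f|` on `Z`, `sup_Z |f| ≤ var_Z f + ν(|f| 1_Z) / ν(Z)`; together with
`var_Z g ≤ 2 sup_Z |g|` this gives the bound with constants `5` and `4`.
-/

open MeasureTheory Set
open scoped ENNReal

section Indicator

variable {α E : Type*} [LinearOrder α] [SeminormedAddGroup E] {F : α → E} {s K : Set α}
  {C : ℝ≥0∞}

theorem eVariationOn_indicator_le_of_forall_lt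
    (hlt : ∀ x ∈ s, x ∉ K → ∀ y ∈ K ∩ s, x < y) (hC : ∀ y ∈ K ∩ s, ‖F y‖ₑ ≤ C) :
    eVariationOn (K.indicator F) s ≤ eVariationOn F (K ∩ s) + C := by
  classical
  refine iSup_le fun ⟨n, u, hu, us⟩ => ?_
  by_cases hK : ∃ i, u i ∈ K
  swap
  · simp only [not_exists] at hK
    simp [indicator_of_notMem (hK _)]
  set a := Nat.find hK
  have hmem : ∀ i, a ≤ i → u i ∈ K := fun i hi => by_contra fun hi' =>
    (hlt _ (us i) hi' _ ⟨Nat.find_spec hK, us a⟩).not_ge (hu hi)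
  set w : ℕ → α := fun i => u (max i a)
  -- the only increment of `K.indicator F ∘ u` not seen by `F ∘ w` is the entry into `K`
  have hjump : ∀ i, edist (K.indicator F (u (i + 1))) (K.indicator F (u i)) ≤
      (if i = a - 1 then C else 0) + edist (F (w (i + 1))) (F (w i)) := by
    intro i
    rcases le_or_gt a i with hi | hi
    · rw [indicator_of_mem (hmem i hi), indicator_of_mem (hmem (i + 1) (by omega))]
      simp only [w, max_eq_left hi, max_eq_left (hi.trans i.le_succ)]
      exact le_add_self
    rw [indicator_of_notMem (Nat.find_min hK hi)]
    rcases (Nat.succ_le_of_lt hi).eq_or_lt with hia | hia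
    · rw [indicator_of_mem (hmem _ hia.ge), edist_zero_right, if_pos (by omega)]
      exact le_add_right (hC _ ⟨hmem _ hia.ge, us _⟩)
    · rw [indicator_of_notMem (Nat.find_min hK hia), edist_self]
      exact zero_le
  calc ∑ i ∈ Finset.range n, edist (K.indicator F (u (i + 1))) (K.indicator F (u i))
      ≤ ∑ i ∈ Finset.range n,
          ((if i = a - 1 then C else 0) + edist (F (w (i + 1))) (F (w i))) :=
        Finset.sum_le_sum fun i _ => hjump i
    _ = (if a - 1 ∈ Finset.range n then C else 0) +
          ∑ i ∈ Finset.range n, edist (F (w (i + 1))) (F (w i)) := by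
        rw [Finset.sum_add_distrib, Finset.sum_ite_eq']
    _ ≤ C + eVariationOn F (K ∩ s) := by
        gcongr
        · split_ifs <;> simp
        · exact eVariationOn.sum_le (fun i j hij => hu (max_le_max hij le_rfl))
            fun i => ⟨hmem _ (le_max_right i a), us _⟩
    _ = eVariationOn F (K ∩ s) + C := add_comm _ _

theorem eVariationOn_indicator_le_of_forall_gt
    (hgt : ∀ x ∈ s, x ∉ K → ∀ y ∈ K ∩ s, y < x) (hC : ∀ y ∈ K ∩ s, ‖F y‖ₑ ≤ C) :
    eVariationOn (K.indicator F) s ≤ eVariationOn F (K ∩ s) + C := by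
  have := eVariationOn_indicator_le_of_forall_lt (α := αᵒᵈ) (F := F ∘ OrderDual.ofDual)
    (s := OrderDual.ofDual ⁻¹' s) (K := OrderDual.ofDual ⁻¹' K) hgt hC
  have hcomp : (OrderDual.ofDual ⁻¹' K).indicator (F ∘ OrderDual.ofDual) =
      K.indicator F ∘ OrderDual.ofDual := funext fun _ => indicator_comp_right _
  rwa [hcomp, ← preimage_inter, eVariationOn.comp_ofDual, eVariationOn.comp_ofDual] at this

theorem eVariationOn_indicator_le_of_ordConnected (hK : K.OrdConnected)
    (hC : ∀ y ∈ K, ‖F y‖ₑ ≤ C) :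
    eVariationOn (K.indicator F) s ≤ eVariationOn F K + 2 * C := by
  rcases K.eq_empty_or_nonempty with rfl | ⟨m, hm⟩
  · rw [indicator_empty, eVariationOn.constant_on (by simp [Set.Subsingleton])]
    exact zero_le
  have hleft : eVariationOn (K.indicator F) (Iic m) ≤ eVariationOn F (K ∩ Iic m) + C :=
    eVariationOn_indicator_le_of_forall_lt
      (fun x hx hxK y hy => lt_of_not_ge fun hyx => hxK (hK.out hy.1 hm ⟨hyx, hx⟩))
      fun y hy => hC y hy.1
  have hright : eVariationOn (K.indicator F) (Ici m) ≤ eVariationOn F (K ∩ Ici m) + C :=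
    eVariationOn_indicator_le_of_forall_gt
      (fun x hx hxK y hy => lt_of_not_ge fun hxy => hxK (hK.out hm hy.1 ⟨hx, hxy⟩))
      fun y hy => hC y hy.1
  have hsplit :
      eVariationOn F (K ∩ Iic m) + eVariationOn F (K ∩ Ici m) = eVariationOn F K := by
    have hgr : IsGreatest (K ∩ Iic m) m := ⟨⟨hm, mem_Iic.2 le_rfl⟩, fun _ h => h.2⟩
    have hle : IsLeast (K ∩ Ici m) m := ⟨⟨hm, mem_Ici.2 le_rfl⟩, fun _ h => h.2⟩
    rw [← eVariationOn.union F hgr hle, ← inter_union_distrib_left, Iic_union_Ici, inter_univ]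
  calc eVariationOn (K.indicator F) s
      ≤ eVariationOn (K.indicator F) (Iic m ∪ Ici m) := by
        rw [Iic_union_Ici]; exact eVariationOn.mono _ (subset_univ s)
    _ = eVariationOn (K.indicator F) (Iic m) + eVariationOn (K.indicator F) (Ici m) :=
        eVariationOn.union _ isGreatest_Iic isLeast_Ici
    _ ≤ (eVariationOn F (K ∩ Iic m) + C) + (eVariationOn F (K ∩ Ici m) + C) :=
        add_le_add hleft hright
    _ = eVariationOn F K + 2 * C := by rw [← hsplit]; ring

end Indicator

theorem eVariationOn_mul_le {α R : Type*} [LinearOrder α] [SeminormedRing R] {f g : α → R}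
    {s : Set α} {Cf Cg : ℝ≥0∞} (hf : ∀ x ∈ s, ‖f x‖ₑ ≤ Cf) (hg : ∀ x ∈ s, ‖g x‖ₑ ≤ Cg) :
    eVariationOn (fun x => f x * g x) s ≤ Cg * eVariationOn f s + Cf * eVariationOn g s := by
  refine iSup_le fun ⟨n, u, hu, us⟩ => ?_
  have hstep : ∀ i, edist (f (u (i + 1)) * g (u (i + 1))) (f (u i) * g (u i)) ≤
      Cg * edist (f (u (i + 1))) (f (u i)) + Cf * edist (g (u (i + 1))) (g (u i)) := by
    have hmul : ∀ x y : R, ‖x * y‖ₑ ≤ ‖x‖ₑ * ‖y‖ₑ := fun x y => by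
      simpa only [enorm_eq_nnnorm, ← ENNReal.coe_mul, ENNReal.coe_le_coe] using nnnorm_mul_le x y
    have hadd : ∀ x y : R, ‖x + y‖ₑ ≤ ‖x‖ₑ + ‖y‖ₑ := fun x y => by
      simpa only [enorm_eq_nnnorm, ← ENNReal.coe_add, ENNReal.coe_le_coe] using nnnorm_add_le x y
    intro i
    set a := f (u i); set a' := f (u (i + 1)); set b := g (u i); set b' := g (u (i + 1))
    calc edist (a' * b') (a * b) = ‖(a' - a) * b' + a * (b' - b)‖ₑ := by
          rw [edist_eq_enorm_sub]; congr 1; noncomm_ring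
      _ ≤ ‖a' - a‖ₑ * ‖b'‖ₑ + ‖a‖ₑ * ‖b' - b‖ₑ :=
          (hadd _ _).trans (add_le_add (hmul _ _) (hmul _ _))
      _ ≤ ‖a' - a‖ₑ * Cg + Cf * ‖b' - b‖ₑ := by gcongr; exacts [hg _ (us _), hf _ (us _)]
      _ = _ := by rw [edist_eq_enorm_sub, edist_eq_enorm_sub, mul_comm]
  calc ∑ i ∈ Finset.range n, edist (f (u (i + 1)) * g (u (i + 1))) (f (u i) * g (u i))
      ≤ ∑ i ∈ Finset.range n,
          (Cg * edist (f (u (i + 1))) (f (u i)) + Cf * edist (g (u (i + 1))) (g (u i))) :=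
        Finset.sum_le_sum fun i _ => hstep i
    _ = Cg * ∑ i ∈ Finset.range n, edist (f (u (i + 1))) (f (u i)) +
          Cf * ∑ i ∈ Finset.range n, edist (g (u (i + 1))) (g (u i)) := by
        rw [Finset.sum_add_distrib, Finset.mul_sum, Finset.mul_sum]
    _ ≤ Cg * eVariationOn f s + Cf * eVariationOn g s := by
        gcongr <;> exact eVariationOn.sum_le hu us

theorem sSup_abs_image_nonneg {α : Type*} (f : α → ℝ) (s : Set α) :
    0 ≤ sSup ((fun x => |f x|) '' s) :=
  Real.sSup_nonneg (by rintro _ ⟨x, -, rfl⟩; exact abs_nonneg _)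

section RealValued

variable {α : Type*} [LinearOrder α] {f g : α → ℝ} {s : Set α}

theorem BoundedVariationOn.abs_le_abs_add_eVariationOn (hf : BoundedVariationOn f s) {x y : α}
    (hx : x ∈ s) (hy : y ∈ s) : |f x| ≤ |f y| + (eVariationOn f s).toReal := by
  have := hf.dist_le hx hy
  rw [Real.dist_eq] at this
  linarith [abs_sub_abs_le_abs_sub (f x) (f y)]

theorem BoundedVariationOn.bddAbove_abs_image (hf : BoundedVariationOn f s) :
    BddAbove ((fun x => |f x|) '' s) := by
  rcases s.eq_empty_or_nonempty with rfl | ⟨y, hy⟩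
  · simp
  exact ⟨_, by rintro _ ⟨x, hx, rfl⟩; exact hf.abs_le_abs_add_eVariationOn hx hy⟩

theorem BoundedVariationOn.enorm_le_ofReal_sSup_abs_image (hf : BoundedVariationOn f s) {x : α}
    (hx : x ∈ s) : ‖f x‖ₑ ≤ ENNReal.ofReal (sSup ((fun x => |f x|) '' s)) :=
  (Real.enorm_eq_ofReal_abs _).trans_le
    (ENNReal.ofReal_le_ofReal (le_csSup hf.bddAbove_abs_image ⟨x, hx, rfl⟩))

theorem toReal_eVariationOn_indicator_comp_mul_le {β : Type*} [LinearOrder β] {ψ : β → α}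
    {J t : Set β} (hf : BoundedVariationOn f s) (hg : BoundedVariationOn g s)
    (hJ : J.OrdConnected) (hψ : BijOn ψ J s) (hψmono : MonotoneOn ψ J ∨ AntitoneOn ψ J) :
    (eVariationOn (J.indicator fun y => f (ψ y) * g (ψ y)) t).toReal ≤
      sSup ((fun x => |g x|) '' s) * (eVariationOn f s).toReal +
        sSup ((fun x => |f x|) '' s) * (eVariationOn g s).toReal +
          2 * (sSup ((fun x => |f x|) '' s) * sSup ((fun x => |g x|) '' s)) := by
  set Mf := sSup ((fun x => |f x|) '' s)
  set Mg := sSup ((fun x => |g x|) '' s)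
  have hcomp :
      eVariationOn (fun y => f (ψ y) * g (ψ y)) J = eVariationOn (fun x => f x * g x) s := by
    rw [← hψ.image_eq]
    rcases hψmono with h | h
    · exact eVariationOn.comp_eq_of_monotoneOn (fun x => f x * g x) ψ h
    · exact eVariationOn.comp_eq_of_antitoneOn (fun x => f x * g x) ψ h
  have hbound : ∀ y ∈ J, ‖f (ψ y) * g (ψ y)‖ₑ ≤ ENNReal.ofReal Mf * ENNReal.ofReal Mg :=
    fun y hy => (enorm_mul _ _).trans_le <| mul_le_mul'
      (hf.enorm_le_ofReal_sSup_abs_image (hψ.mapsTo hy))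
      (hg.enorm_le_ofReal_sSup_abs_image (hψ.mapsTo hy))
  have hMf₀ := sSup_abs_image_nonneg f s
  have hMg₀ := sSup_abs_image_nonneg g s
  have hVf₀ := mul_nonneg hMg₀ (ENNReal.toReal_nonneg (a := eVariationOn f s))
  have hVg₀ := mul_nonneg hMf₀ (ENNReal.toReal_nonneg (a := eVariationOn g s))
  refine ENNReal.toReal_le_of_le_ofReal (by positivity) ?_
  calc _ ≤ eVariationOn (fun y => f (ψ y) * g (ψ y)) J +
          2 * (ENNReal.ofReal Mf * ENNReal.ofReal Mg) :=
        eVariationOn_indicator_le_of_ordConnected hJ hbound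
    _ ≤ ENNReal.ofReal Mg * eVariationOn f s + ENNReal.ofReal Mf * eVariationOn g s +
          2 * (ENNReal.ofReal Mf * ENNReal.ofReal Mg) := by
        rw [hcomp]
        gcongr
        exact eVariationOn_mul_le (fun _ => hf.enorm_le_ofReal_sSup_abs_image)
          (fun _ => hg.enorm_le_ofReal_sSup_abs_image)
    _ = _ := by
        rw [ENNReal.ofReal_add (add_nonneg hVf₀ hVg₀) (by positivity),
          ENNReal.ofReal_add hVf₀ hVg₀, ENNReal.ofReal_mul hMg₀, ENNReal.ofReal_mul hMf₀,
          ENNReal.ofReal_mul zero_le_two, ENNReal.ofReal_mul hMf₀, ENNReal.ofReal_toReal hf,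
          ENNReal.ofReal_toReal hg, ENNReal.ofReal_ofNat]

end RealValued

theorem LocallyBoundedVariationOn.aemeasurable_restrict {f : ℝ → ℝ} {s : Set ℝ}
    (hf : LocallyBoundedVariationOn f s) (hs : MeasurableSet s) (μ : Measure ℝ) :
    AEMeasurable f (μ.restrict s) := by
  obtain ⟨p, q, hp, hq, rfl⟩ := hf.exists_monotoneOn_sub_monotoneOn
  exact (aemeasurable_restrict_of_monotoneOn hs hp).sub
    (aemeasurable_restrict_of_monotoneOn hs hq)

theorem BoundedVariationOn.integrableOn {f : ℝ → ℝ} {s : Set ℝ} {μ : Measure ℝ}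
    (hf : BoundedVariationOn f s) (hs : MeasurableSet s) (hμs : μ s ≠ ∞) :
    IntegrableOn f s μ := by
  rcases s.eq_empty_or_nonempty with rfl | ⟨y, hy⟩
  · simp
  refine IntegrableOn.of_bound hμs.lt_top
    (hf.locallyBoundedVariationOn.aemeasurable_restrict hs μ).aestronglyMeasurable
    (|f y| + (eVariationOn f s).toReal) ?_
  filter_upwards [ae_restrict_mem hs] with x hx
  exact hf.abs_le_abs_add_eVariationOn hx hy

theorem BoundedVariationOn.sSup_abs_image_le_add_setAverage {f : ℝ → ℝ} {s : Set ℝ}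
    {μ : Measure ℝ} (hf : BoundedVariationOn f s) (hs : MeasurableSet s) (hμ₀ : μ s ≠ 0)
    (hμs : μ s ≠ ∞) :
    sSup ((fun x => |f x|) '' s) ≤ (eVariationOn f s).toReal + ⨍ x in s, |f x| ∂μ := by
  obtain ⟨y, hy, hmin⟩ := exists_le_setAverage hμ₀ hμs (hf.integrableOn hs hμs).abs
  refine csSup_le ((nonempty_of_measure_ne_zero hμ₀).image _) ?_
  rintro _ ⟨x, hx, rfl⟩
  linarith [hf.abs_le_abs_add_eVariationOn hx hy]

theorem stmt10_general (f g : ℝ → ℝ)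
    (hf : BoundedVariationOn f (Set.Icc 0 1)) (hg : BoundedVariationOn g (Set.Icc 0 1))
    (Z J : Set ℝ) (hZsub : Z ⊆ Set.Icc 0 1)
    (hZmeas : MeasurableSet Z)
    (hJconn : J.OrdConnected)
    (ψ : ℝ → ℝ) (hψ : Set.BijOn ψ J Z)
    (hψmono : StrictMonoOn ψ J ∨ StrictAntiOn ψ J)
    (ν : Measure ℝ) [IsProbabilityMeasure ν] (hνZ : 0 < ν Z)
    (hvarg : (eVariationOn g Z).toReal ≤ 2 * sSup ((fun x => |g x|) '' Z)) :
    (eVariationOn (Set.indicator J fun y => f (ψ y) * g (ψ y)) (Set.Icc 0 1)).toReal ≤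
      9 * sSup ((fun x => |g x|) '' Z) * (eVariationOn f Z).toReal +
        8 * sSup ((fun x => |g x|) '' Z) * ((∫ x in Z, |f x| ∂ν) / (ν Z).toReal) := by
  have hfZ := hf.mono hZsub
  have hvar := toReal_eVariationOn_indicator_comp_mul_le (t := Icc 0 1) hfZ (hg.mono hZsub)
    hJconn hψ (hψmono.imp StrictMonoOn.monotoneOn StrictAntiOn.antitoneOn)
  have hmean := hfZ.sSup_abs_image_le_add_setAverage hZmeas hνZ.ne' (measure_ne_top ν Z)
  rw [setAverage_eq, smul_eq_mul, inv_mul_eq_div, measureReal_def] at hmean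
  have hMf₀ := sSup_abs_image_nonneg f Z
  have hMg₀ := sSup_abs_image_nonneg g Z
  nlinarith [mul_le_mul_of_nonneg_left hvarg hMf₀, mul_le_mul_of_nonneg_left hmean hMg₀,
    mul_nonneg hMf₀ hMg₀, mul_nonneg hMg₀ (ENNReal.toReal_nonneg (a := eVariationOn f Z))]

/-- Single-branch building block of the Lasota–Yorke inequality: for `f, g` of bounded
variation on `[0,1]`, an interval `Z ⊆ [0,1]`, a monotone bijection `ψ : J → Z` from an
interval `J ⊆ [0,1]`, and a probability measure `ν` with `ν(Z) > 0`, provided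
`var_Z(g) ≤ 2 sup_Z|g|` one has
`var(1_J · ((f·g)∘ψ)) ≤ 9 sup_Z|g| var_Z(f) + 8 sup_Z|g| ν(|f|·1_Z)/ν(Z)`. -/
theorem stmt10 (f g : ℝ → ℝ)
    (hf : BoundedVariationOn f (Set.Icc 0 1)) (hg : BoundedVariationOn g (Set.Icc 0 1))
    (Z J : Set ℝ) (hZsub : Z ⊆ Set.Icc 0 1) (hZconn : Z.OrdConnected) (hZne : Z.Nonempty)
    (hZmeas : MeasurableSet Z)
    (hJsub : J ⊆ Set.Icc 0 1) (hJconn : J.OrdConnected)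
    (ψ : ℝ → ℝ) (hψ : Set.BijOn ψ J Z)
    (hψmono : StrictMonoOn ψ J ∨ StrictAntiOn ψ J)
    (ν : Measure ℝ) [IsProbabilityMeasure ν] (hνZ : 0 < ν Z)
    (hvarg : (eVariationOn g Z).toReal ≤ 2 * sSup ((fun x => |g x|) '' Z)) :
    (eVariationOn (Set.indicator J fun y => f (ψ y) * g (ψ y)) (Set.Icc 0 1)).toReal ≤
      9 * sSup ((fun x => |g x|) '' Z) * (eVariationOn f Z).toReal +
        8 * sSup ((fun x => |g x|) '' Z) * ((∫ x in Z, |f x| ∂ν) / (ν Z).toReal) :=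
  stmt10_general f g hf hg Z J hZsub hZmeas hJconn ψ hψ hψmono ν hνZ hvarg
end

section
/- Let (Ω, m, σ) be ergodic and invertible, suppose log λ_{ω,0} and log λ_{ω,ε} are in L¹(m), and suppose that for a fixed ε the normalized survival probabilities satisfy μ_{ω,0}(X_{ω,N,ε}) = (λ_{ω,ε}^{N+1}/λ_{ω,0}^{N+1}) (c_{ω,ε} + r_{ω,N,ε}) where c_{ω,ε} > 0 and r_{ω,N,ε} → 0 as N → ∞ with |r_{ω,N,ε}| bounded. Then the escape rate exists and R_ε(μ_{ω,0}) := −lim_{N→∞} (1/N) log μ_{ω,0}(X_{ω,N,ε}) = ∫_Ω log λ_{ω,0} dm − ∫_Ω log λ_{ω,ε} dm for m-a.e. ω; in particular the escape rate is ω-independent. -/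
/-!
Taking logarithms, `log μ_{ω,0}(X_{ω,N,ε})` is the Birkhoff sum of `log λ_ε - log λ_0` over
the first `N + 1` points of the orbit of `ω`, plus `log (c_ω + r_{ω,N})`, which converges to
`log c_ω` and so disappears after division by `N`. The rate is then given by Birkhoff's
pointwise ergodic theorem, proved from Hopf's maximal inequality: if `∫ g < a`, the set where
the Birkhoff sums of `g - a` are bounded above is invariant, hence null or conull by ergodicity,
and the maximal inequality rules out the null case.
-/

open MeasureTheory Filter Set Topology

section BirkhoffErgodicTheorem

variable {α : Type*}

section MaximalInequality

variable (f : α → α) (g : α → ℝ)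

/-- `birkhoffMax f g n x = max_{k ≤ n} birkhoffSum f g k x`; the term `k = 0` makes it
nonnegative. -/
def birkhoffMax : ℕ → α → ℝ
  | 0 => 0
  | n + 1 => fun x => max (birkhoffSum f g (n + 1) x) (birkhoffMax n x)

lemma birkhoffMax_nonneg (n : ℕ) (x : α) : 0 ≤ birkhoffMax f g n x := by
  induction n with
  | zero => exact le_rfl
  | succ n ih => exact ih.trans (le_max_right _ _)

lemma birkhoffMax_mono (x : α) : Monotone (birkhoffMax f g · x) :=
  monotone_nat_of_le_succ fun _ => le_max_right _ _

lemma birkhoffSum_le_birkhoffMax (n : ℕ) (x : α) :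
    birkhoffSum f g n x ≤ birkhoffMax f g n x := by
  cases n with
  | zero => simp [birkhoffMax]
  | succ n => exact le_max_left _ _

lemma birkhoffMax_le_max_zero_add (n : ℕ) (x : α) :
    birkhoffMax f g n x ≤ max 0 (g x + birkhoffMax f g n (f x)) := by
  induction n with
  | zero => simp [birkhoffMax]
  | succ n ih =>
    have hmono := birkhoffMax_mono f g (f x) n.le_succ
    refine max_le ?_ (ih.trans (by gcongr))
    rw [birkhoffSum_succ']
    exact le_max_of_le_right
      (by gcongr; exact (birkhoffSum_le_birkhoffMax f g n (f x)).trans hmono)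

variable {f g} [MeasurableSpace α] {μ : Measure α}

lemma measurable_birkhoffSum (hf : Measurable f) (hg : Measurable g) (n : ℕ) :
    Measurable (birkhoffSum f g n) :=
  Finset.measurable_sum _ fun k _ => hg.comp (hf.iterate k)

lemma measurable_birkhoffMax (hf : Measurable f) (hg : Measurable g) (n : ℕ) :
    Measurable (birkhoffMax f g n) := by
  induction n with
  | zero => exact measurable_const
  | succ n ih => exact (measurable_birkhoffSum hf hg (n + 1)).max ih

lemma integrable_birkhoffSum (hf : MeasurePreserving f μ μ) (hg : Integrable g μ) (n : ℕ) :
    Integrable (birkhoffSum f g n) μ :=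
  integrable_finsetSum _ fun k _ => (hf.iterate k).integrable_comp_of_integrable hg

lemma integrable_birkhoffMax (hf : MeasurePreserving f μ μ) (hg : Integrable g μ) (n : ℕ) :
    Integrable (birkhoffMax f g n) μ := by
  induction n with
  | zero => exact integrable_zero _ _ _
  | succ n ih => exact (integrable_birkhoffSum hf hg (n + 1)).sup ih

/-- Hopf's maximal inequality. -/
theorem setIntegral_birkhoffMax_pos_nonneg (hf : MeasurePreserving f μ μ) (hgm : Measurable g)
    (hg : Integrable g μ) (n : ℕ) : 0 ≤ ∫ x in {x | 0 < birkhoffMax f g n x}, g x ∂μ := by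
  set M := birkhoffMax f g n
  set E := {x | 0 < M x}
  have hMm : Measurable M := measurable_birkhoffMax hf.measurable hgm n
  have hM : Integrable M μ := integrable_birkhoffMax hf hg n
  have hMf : Integrable (M ∘ f) μ := hf.integrable_comp_of_integrable hM
  have hle : ∀ x ∈ E, M x - M (f x) ≤ g x := fun x hx => by
    linarith [(le_max_iff.1 (birkhoffMax_le_max_zero_add f g n x)).resolve_left hx.not_ge]
  have hM_E : ∫ x in E, M x ∂μ = ∫ x, M x ∂μ :=
    setIntegral_eq_integral_of_forall_compl_eq_zero fun x hx =>
      le_antisymm (not_lt.1 hx) (birkhoffMax_nonneg f g n x)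
  have hM_comp : ∫ x, M (f x) ∂μ = ∫ x, M x ∂μ := by
    rw [← integral_map hf.measurable.aemeasurable, hf.map_eq]
    exact hMm.aestronglyMeasurable
  calc 0 = ∫ x, M x ∂μ - ∫ x, M (f x) ∂μ := by rw [hM_comp, sub_self]
    _ ≤ ∫ x in E, M x ∂μ - ∫ x in E, M (f x) ∂μ := by
      rw [hM_E]
      exact sub_le_sub_left (setIntegral_le_integral hMf
        (ae_of_all _ fun x => birkhoffMax_nonneg f g n (f x))) _
    _ = ∫ x in E, (M x - M (f x)) ∂μ := (integral_sub hM.integrableOn hMf.integrableOn).symm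
    _ ≤ ∫ x in E, g x ∂μ :=
      setIntegral_mono_on (hM.integrableOn.sub hMf.integrableOn) hg.integrableOn
        (measurableSet_lt measurable_const hMm) hle

theorem integral_nonneg_of_ae_exists_birkhoffSum_pos (hf : MeasurePreserving f μ μ)
    (hgm : Measurable g) (hg : Integrable g μ) (h : ∀ᵐ x ∂μ, ∃ n, 0 < birkhoffSum f g n x) :
    0 ≤ ∫ x, g x ∂μ := by
  set E : ℕ → Set α := fun n => {x | 0 < birkhoffMax f g n x}
  have hE : ∀ n, MeasurableSet (E n) := fun n =>
    measurableSet_lt measurable_const (measurable_birkhoffMax hf.measurable hgm n)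
  have hmono : Monotone E := fun i j hij x hx => hx.trans_le (birkhoffMax_mono f g x hij)
  have hcover : ∀ᵐ x ∂μ, x ∈ ⋃ n, E n := h.mono fun x ⟨n, hn⟩ =>
    mem_iUnion.2 ⟨n, hn.trans_le (birkhoffSum_le_birkhoffMax f g n x)⟩
  have hlim := tendsto_setIntegral_of_monotone hE hmono hg.integrableOn
  rw [Measure.restrict_eq_self_of_ae_mem hcover] at hlim
  exact ge_of_tendsto' hlim (setIntegral_birkhoffMax_pos_nonneg hf hgm hg)

end MaximalInequality

lemma bddAbove_range_birkhoffSum_apply_iff (f : α → α) (g : α → ℝ) (x : α) :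
    BddAbove (range fun n => birkhoffSum f g n (f x)) ↔
      BddAbove (range fun n => birkhoffSum f g n x) := by
  constructor
  · rintro ⟨B, hB⟩
    refine ⟨max 0 (g x + B), forall_mem_range.2 fun n => ?_⟩
    cases n with
    | zero => simp
    | succ n =>
      rw [birkhoffSum_succ']
      exact le_max_of_le_right (add_le_add_right (hB (mem_range_self n)) _)
  · rintro ⟨B, hB⟩
    refine ⟨B - g x, forall_mem_range.2 fun n => ?_⟩
    have := hB (mem_range_self (n + 1))
    rw [birkhoffSum_succ'] at this
    linarith

lemma eventually_inv_mul_lt_of_bddAbove_sub {u : ℕ → ℝ} {a b : ℝ} (hab : a < b)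
    (hu : BddAbove (range fun n => u n - n * a)) :
    ∀ᶠ n : ℕ in atTop, (n : ℝ)⁻¹ * u n < b := by
  obtain ⟨M, hM⟩ := hu
  have hlim : Tendsto (fun n : ℕ => a + (n : ℝ)⁻¹ * M) atTop (𝓝 a) := by
    simpa using tendsto_const_nhds.add (tendsto_inv_atTop_nhds_zero_nat.mul_const M)
  filter_upwards [hlim.eventually (gt_mem_nhds hab), eventually_gt_atTop 0] with n hn hn0
  refine lt_of_le_of_lt ?_ hn
  have hun : u n - n * a ≤ M := hM (mem_range_self n)
  have hn0' : (0 : ℝ) < n := by exact_mod_cast hn0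
  rw [inv_mul_le_iff₀ hn0', mul_add, mul_inv_cancel_left₀ hn0'.ne']
  linarith

namespace Ergodic

variable [MeasurableSpace α] {μ : Measure α} [IsProbabilityMeasure μ] {f : α → α} {g : α → ℝ}

theorem ae_bddAbove_birkhoffSum_sub (hf : Ergodic f μ) (hgm : Measurable g)
    (hg : Integrable g μ) {a : ℝ} (ha : ∫ x, g x ∂μ < a) :
    ∀ᵐ x ∂μ, BddAbove (range fun n => birkhoffSum f g n x - n * a) := by
  set h : α → ℝ := fun x => g x - a
  have hhm : Measurable h := hgm.sub measurable_const
  have hh : Integrable h μ := hg.sub (integrable_const a)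
  have hS : ∀ n x, birkhoffSum f h n x = birkhoffSum f g n x - n * a := fun n x => by
    simp [h, birkhoffSum, Finset.sum_sub_distrib]
  simp_rw [← hS]
  set A := {x | BddAbove (range fun n => birkhoffSum f h n x)}
  have hA : MeasurableSet A :=
    measurableSet_bddAbove_range (measurable_birkhoffSum hf.measurable hhm)
  have hfA : f ⁻¹' A = A := ext fun x => bddAbove_range_birkhoffSum_apply_iff f h x
  rcases hf.measure_self_or_compl_eq_zero hA hfA with hA0 | hAc0
  · have hpos : ∀ᵐ x ∂μ, ∃ n, 0 < birkhoffSum f h n x :=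
      (measure_eq_zero_iff_ae_notMem.1 hA0).mono fun x hx => by
        obtain ⟨_, ⟨n, rfl⟩, hn⟩ := not_bddAbove_iff.1 hx 0
        exact ⟨n, hn⟩
    have := integral_nonneg_of_ae_exists_birkhoffSum_pos hf.toMeasurePreserving hhm hh hpos
    simp only [h, integral_sub hg (integrable_const a), integral_const, probReal_univ,
      smul_eq_mul, one_mul, sub_nonneg] at this
    linarith
  · exact mem_ae_iff.2 hAc0

theorem ae_eventually_birkhoffAverage_lt (hf : Ergodic f μ) (hgm : Measurable g)
    (hg : Integrable g μ) {b : ℝ} (hb : ∫ x, g x ∂μ < b) :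
    ∀ᵐ x ∂μ, ∀ᶠ n in atTop, birkhoffAverage ℝ f g n x < b := by
  obtain ⟨a, hga, hab⟩ := exists_between hb
  filter_upwards [hf.ae_bddAbove_birkhoffSum_sub hgm hg hga] with x hx
  exact eventually_inv_mul_lt_of_bddAbove_sub hab hx

theorem ae_eventually_lt_birkhoffAverage (hf : Ergodic f μ) (hgm : Measurable g)
    (hg : Integrable g μ) {b : ℝ} (hb : b < ∫ x, g x ∂μ) :
    ∀ᵐ x ∂μ, ∀ᶠ n in atTop, b < birkhoffAverage ℝ f g n x := by
  have := hf.ae_eventually_birkhoffAverage_lt hgm.neg hg.neg (b := -b)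
    (by simpa only [Pi.neg_apply, integral_neg, neg_lt_neg_iff])
  simpa [birkhoffAverage_neg] using this

/-- Birkhoff's pointwise ergodic theorem. -/
theorem ae_tendsto_birkhoffAverage (hf : Ergodic f μ) (hg : Integrable g μ) :
    ∀ᵐ x ∂μ, Tendsto (birkhoffAverage ℝ f g · x) atTop (𝓝 (∫ x, g x ∂μ)) := by
  wlog hgm : Measurable g generalizing g
  · have hae := hg.1.ae_eq_mk
    filter_upwards [this (hg.congr hae) hg.1.stronglyMeasurable_mk.measurable,
      ae_all_iff.2 fun n =>
        hf.quasiMeasurePreserving.birkhoffAverage_ae_eq_of_ae_eq ℝ hae n] with x hx hxn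
    rw [integral_congr_ae hae]
    simpa [hxn] using hx
  have hup : ∀ᵐ x ∂μ, ∀ q : ℚ, ∫ x, g x ∂μ < q →
      ∀ᶠ n in atTop, birkhoffAverage ℝ f g n x < q :=
    ae_all_iff.2 fun _ =>
      eventually_imp_distrib_left.2 (hf.ae_eventually_birkhoffAverage_lt hgm hg)
  have hlo : ∀ᵐ x ∂μ, ∀ q : ℚ, q < ∫ x, g x ∂μ →
      ∀ᶠ n in atTop, q < birkhoffAverage ℝ f g n x :=
    ae_all_iff.2 fun _ =>
      eventually_imp_distrib_left.2 (hf.ae_eventually_lt_birkhoffAverage hgm hg)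
  filter_upwards [hup, hlo] with x hxu hxl
  refine tendsto_order.2 ⟨fun b hb => ?_, fun b hb => ?_⟩
  · obtain ⟨q, hbq, hq⟩ := exists_rat_btwn hb
    exact (hxl q hq).mono fun n hn => hbq.trans hn
  · obtain ⟨q, hq, hqb⟩ := exists_rat_btwn hb
    exact (hxu q hq).mono fun n hn => hn.trans hqb

end Ergodic

lemma log_prod_iterate_eq_birkhoffSum (f : α → α) {g : α → ℝ} (hg : ∀ x, 0 < g x) (n : ℕ)
    (x : α) : Real.log (∏ j ∈ Finset.range n, g (f^[j] x)) =
      birkhoffSum f (fun y => Real.log (g y)) n x :=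
  Real.log_prod fun _ _ => (hg _).ne'

lemma tendsto_birkhoffSum_succ_div {f : α → α} {g : α → ℝ} {x : α} {L : ℝ}
    (h : Tendsto (birkhoffAverage ℝ f g · x) atTop (𝓝 L)) :
    Tendsto (fun n : ℕ => birkhoffSum f g (n + 1) x / n) atTop (𝓝 L) := by
  have hsucc := h.comp (tendsto_add_atTop_nat 1)
  have hlim := hsucc.add (hsucc.mul tendsto_one_div_atTop_nhds_zero_nat)
  rw [mul_zero, add_zero] at hlim
  refine hlim.congr' ((eventually_gt_atTop 0).mono fun n hn => ?_)
  have hn' : (n : ℝ) ≠ 0 := by exact_mod_cast hn.ne'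
  simp only [Function.comp_apply, birkhoffAverage, smul_eq_mul, Nat.cast_add, Nat.cast_one]
  field_simp

end BirkhoffErgodicTheorem

theorem stmt12_general {Ω : Type*} [MeasurableSpace Ω] (m : Measure Ω) [IsProbabilityMeasure m]
    (σ : Ω → Ω) (hσ : Ergodic σ m)
    (lam0 lame : Ω → ℝ) (h0pos : ∀ ω, 0 < lam0 ω) (hepos : ∀ ω, 0 < lame ω)
    (hint0 : Integrable (fun ω => Real.log (lam0 ω)) m)
    (hinte : Integrable (fun ω => Real.log (lame ω)) m)
    (P : Ω → ℕ → ℝ) (c : Ω → ℝ) (r : Ω → ℕ → ℝ)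
    (hc : ∀ ω, 0 < c ω)
    (hr : ∀ ω, Tendsto (fun N => r ω N) atTop (nhds 0))
    (hP : ∀ ω N, P ω N =
      ((∏ j ∈ Finset.range (N + 1), lame (σ^[j] ω)) /
        ∏ j ∈ Finset.range (N + 1), lam0 (σ^[j] ω)) * (c ω + r ω N)) :
    ∀ᵐ ω ∂m, Tendsto (fun N : ℕ => -(1 / (N : ℝ)) * Real.log (P ω N)) atTop
      (nhds ((∫ ω, Real.log (lam0 ω) ∂m) - ∫ ω, Real.log (lame ω) ∂m)) := by
  filter_upwards [hσ.ae_tendsto_birkhoffAverage hint0, hσ.ae_tendsto_birkhoffAverage hinte]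
    with ω h0 he
  have hcr : Tendsto (fun N => c ω + r ω N) atTop (𝓝 (c ω)) := by
    simpa using (hr ω).const_add (c ω)
  have hlog_cr : Tendsto (fun N : ℕ => Real.log (c ω + r ω N) / N) atTop (𝓝 0) :=
    ((Real.continuousAt_log (hc ω).ne').tendsto.comp hcr).div_atTop tendsto_natCast_atTop_atTop
  have hlim :=
    ((tendsto_birkhoffSum_succ_div h0).sub (tendsto_birkhoffSum_succ_div he)).sub hlog_cr
  rw [sub_zero] at hlim
  refine hlim.congr' ((hcr.eventually (eventually_gt_nhds (hc ω))).mono fun N hpos => ?_)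
  have hprod (lam : Ω → ℝ) (hlam : ∀ ω, 0 < lam ω) :
      0 < ∏ j ∈ Finset.range (N + 1), lam (σ^[j] ω) :=
    Finset.prod_pos fun _ _ => hlam _
  dsimp only
  rw [hP, Real.log_mul (div_pos (hprod _ hepos) (hprod _ h0pos)).ne' hpos.ne',
    Real.log_div (hprod _ hepos).ne' (hprod _ h0pos).ne', log_prod_iterate_eq_birkhoffSum σ hepos,
    log_prod_iterate_eq_birkhoffSum σ h0pos]
  ring

/-- Escape rate via the Birkhoff ergodic theorem: if the survival probabilities satisfy
`P ω N = (λ_{ω,ε}^{N+1}/λ_{ω,0}^{N+1})(c_ω + r_{ω,N})` with `c_ω > 0`, `r_{ω,N} → 0` bounded,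
and `log λ_{ω,0}, log λ_{ω,ε} ∈ L¹(m)`, then for a.e. `ω` the escape rate exists and equals
`∫ log λ_{ω,0} dm − ∫ log λ_{ω,ε} dm` (an `ω`-independent constant). -/
theorem stmt12 {Ω : Type*} [MeasurableSpace Ω] (m : Measure Ω) [IsProbabilityMeasure m]
    (σ : Ω → Ω) (hσ : Ergodic σ m) (hbij : Function.Bijective σ)
    (lam0 lame : Ω → ℝ) (h0pos : ∀ ω, 0 < lam0 ω) (hepos : ∀ ω, 0 < lame ω)
    (hint0 : Integrable (fun ω => Real.log (lam0 ω)) m)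
    (hinte : Integrable (fun ω => Real.log (lame ω)) m)
    (P : Ω → ℕ → ℝ) (c : Ω → ℝ) (r : Ω → ℕ → ℝ) (R : ℝ)
    (hc : ∀ ω, 0 < c ω)
    (hr : ∀ ω, Tendsto (fun N => r ω N) atTop (nhds 0))
    (hrbd : ∀ ω N, |r ω N| ≤ R)
    (hP : ∀ ω N, P ω N =
      ((∏ j ∈ Finset.range (N + 1), lame (σ^[j] ω)) /
        ∏ j ∈ Finset.range (N + 1), lam0 (σ^[j] ω)) * (c ω + r ω N)) :
    ∀ᵐ ω ∂m, Tendsto (fun N : ℕ => -(1 / (N : ℝ)) * Real.log (P ω N)) atTop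
      (nhds ((∫ ω, Real.log (lam0 ω) ∂m) - ∫ ω, Real.log (lame ω) ∂m)) :=
  stmt12_general m σ hσ lam0 lame h0pos hepos hint0 hinte P c r hc hr hP
end

section
/- Let T : [0,1] → [0,1] be a map with a fixed point x₀ at which T is differentiable with |T'(x₀)| = s > 1, and suppose T is linear with slope s on a neighborhood U of x₀. Let (H_N) be a decreasing sequence of intervals centered at x₀ contained in U with Leb(H_N) → 0. Then for each fixed k ≥ 1, for all sufficiently large N the set {x ∈ H_N : T x ∉ H_N, …, T^k x ∉ H_N, T^{k+1} x ∈ H_N} is empty; while for k = 0, Leb(T^{−1} H_N ∩ H_N)/Leb(H_N) = 1/s for all sufficiently large N. -/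
open MeasureTheory Filter Set

/-- Local analysis near an expanding fixed point: if `T` fixes `x₀`, is differentiable there
with derivative `s > 1` and is linear with slope `s` on a `ρ`-neighbourhood of `x₀`, and
`H_N = [x₀ − δ_N, x₀ + δ_N]` is a decreasing family of intervals centred at `x₀` inside that
neighbourhood with length tending to `0`, then for each `k ≥ 1` the set of points of `H_N`
avoiding `H_N` for `k` steps and returning at step `k+1` is empty for all large `N`, while
for `k = 0`, `Leb(T⁻¹H_N ∩ H_N)/Leb(H_N) = 1/s` for all large `N`. -/
theorem stmt14 (T : ℝ → ℝ) (x₀ s : ℝ) (hs : 1 < s)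
    (hmap : Set.MapsTo T (Set.Icc 0 1) (Set.Icc 0 1)) (hx₀ : x₀ ∈ Set.Icc (0:ℝ) 1)
    (hfix : T x₀ = x₀) (hderiv : HasDerivAt T s x₀)
    (ρ : ℝ) (hρ : 0 < ρ)
    (hlin : ∀ x, |x - x₀| < ρ → T x = x₀ + s * (x - x₀))
    (δ : ℕ → ℝ) (hδpos : ∀ N, 0 < δ N) (hδanti : Antitone δ)
    (hδρ : ∀ N, δ N < ρ)
    (hδlim : Tendsto δ atTop (nhds 0)) :
    (∀ k : ℕ, 1 ≤ k → ∀ᶠ N in atTop,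
      {x : ℝ | x ∈ Set.Icc (x₀ - δ N) (x₀ + δ N) ∧
        (∀ j, 1 ≤ j → j ≤ k → T^[j] x ∉ Set.Icc (x₀ - δ N) (x₀ + δ N)) ∧
        T^[k + 1] x ∈ Set.Icc (x₀ - δ N) (x₀ + δ N)} = ∅) ∧
    (∀ᶠ N in atTop,
      (volume (T ⁻¹' Set.Icc (x₀ - δ N) (x₀ + δ N) ∩
          Set.Icc (x₀ - δ N) (x₀ + δ N))).toReal /
        (volume (Set.Icc (x₀ - δ N) (x₀ + δ N))).toReal = 1 / s) := by
  have hs0 : (0:ℝ) < s := lt_trans one_pos hs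
  constructor
  · intro k hk
    have hev : ∀ᶠ N in atTop, δ N < ρ / s ^ (k + 1) := by
      apply hδlim.eventually_lt_const
      positivity
    filter_upwards [hev] with N hN
    ext x
    simp only [Set.mem_setOf_eq, Set.mem_empty_iff_false, iff_false]
    rintro ⟨hx, havoid, hret⟩
    have hδN := hδpos N
    have hxabs : |x - x₀| ≤ δ N := by
      rw [abs_le]; constructor <;> [linarith [hx.1]; linarith [hx.2]]
    -- growth bound: |T^[j] x - x₀| ≤ s^j * δ N for j ≤ k+1
    have hbound : ∀ j, j ≤ k + 1 → |T^[j] x - x₀| ≤ s ^ j * δ N := by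
      intro j
      induction j with
      | zero => intro _; simpa using hxabs
      | succ j ih =>
        intro hj
        have hj' : j ≤ k + 1 := Nat.le_of_succ_le hj
        have h1 : |T^[j] x - x₀| ≤ s ^ j * δ N := ih hj'
        have hρj : s ^ j * δ N < ρ := by
          have h2 : s ^ j ≤ s ^ (k + 1) := pow_le_pow_right₀ (le_of_lt hs) hj'
          have h3 : s ^ j * δ N ≤ s ^ (k + 1) * δ N :=
            mul_le_mul_of_nonneg_right h2 (le_of_lt hδN)
          have h4 : s ^ (k + 1) * δ N < ρ := by
            have := hN
            have hsk : (0:ℝ) < s ^ (k + 1) := by positivity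
            calc s ^ (k + 1) * δ N < s ^ (k + 1) * (ρ / s ^ (k + 1)) := by
                  exact mul_lt_mul_of_pos_left hN hsk
              _ = ρ := by field_simp
          linarith
        have hlt : |T^[j] x - x₀| < ρ := lt_of_le_of_lt h1 hρj
        have hTlin : T (T^[j] x) = x₀ + s * (T^[j] x - x₀) := hlin _ hlt
        rw [Function.iterate_succ_apply', hTlin]
        have : |x₀ + s * (T^[j] x - x₀) - x₀| = s * |T^[j] x - x₀| := by
          rw [add_sub_cancel_left, abs_mul, abs_of_pos hs0]
        rw [this, pow_succ, mul_comm (s ^ j) s, mul_assoc]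
        exact mul_le_mul_of_nonneg_left h1 (le_of_lt hs0)
    -- lower bound: |T^[j] x - x₀| > δ N for 1 ≤ j ≤ k+1
    have hlow : ∀ j, 1 ≤ j → j ≤ k + 1 → δ N < |T^[j] x - x₀| := by
      intro j
      induction j with
      | zero => intro h; exact absurd h (by norm_num)
      | succ j ih =>
        intro _ hj
        rcases Nat.eq_zero_or_pos j with rfl | hj1
        · -- j+1 = 1 : use havoid 1
          have h1 := havoid 1 le_rfl hk
          simp only [Function.iterate_one, Set.mem_Icc, not_and_or, not_le] at h1
          show δ N < |T^[1] x - x₀|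
          rw [Function.iterate_one, lt_abs]
          rcases h1 with h | h
          · right; linarith
          · left; linarith
        · have hj' : j ≤ k + 1 := Nat.le_of_succ_le hj
          have hprev : δ N < |T^[j] x - x₀| := ih hj1 hj'
          have h1 : |T^[j] x - x₀| ≤ s ^ j * δ N := hbound j hj'
          have hρj : s ^ j * δ N < ρ := by
            have h2 : s ^ j ≤ s ^ (k + 1) := pow_le_pow_right₀ (le_of_lt hs) hj'
            have h3 : s ^ j * δ N ≤ s ^ (k + 1) * δ N :=
              mul_le_mul_of_nonneg_right h2 (le_of_lt hδN)
            have hsk : (0:ℝ) < s ^ (k + 1) := by positivity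
            have h4 : s ^ (k + 1) * δ N < ρ := by
              calc s ^ (k + 1) * δ N < s ^ (k + 1) * (ρ / s ^ (k + 1)) :=
                    mul_lt_mul_of_pos_left hN hsk
                _ = ρ := by field_simp
            linarith
          have hlt : |T^[j] x - x₀| < ρ := lt_of_le_of_lt h1 hρj
          have hTlin : T (T^[j] x) = x₀ + s * (T^[j] x - x₀) := hlin _ hlt
          rw [Function.iterate_succ_apply', hTlin]
          have heq : |x₀ + s * (T^[j] x - x₀) - x₀| = s * |T^[j] x - x₀| := by
            rw [add_sub_cancel_left, abs_mul, abs_of_pos hs0]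
          rw [heq]
          calc δ N < |T^[j] x - x₀| := hprev
            _ = 1 * |T^[j] x - x₀| := (one_mul _).symm
            _ ≤ s * |T^[j] x - x₀| := by
                apply mul_le_mul_of_nonneg_right (le_of_lt hs) (abs_nonneg _)
    have hfin := hlow (k + 1) (Nat.le_add_left 1 k) le_rfl
    have : |T^[k+1] x - x₀| ≤ δ N := by
      rw [abs_le]; constructor <;> [linarith [hret.1]; linarith [hret.2]]
    linarith
  · filter_upwards with N
    have hδN := hδpos N
    have hseteq : T ⁻¹' Set.Icc (x₀ - δ N) (x₀ + δ N) ∩ Set.Icc (x₀ - δ N) (x₀ + δ N)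
        = Set.Icc (x₀ - δ N / s) (x₀ + δ N / s) := by
      ext x
      simp only [Set.mem_inter_iff, Set.mem_preimage, Set.mem_Icc]
      constructor
      · rintro ⟨hT, hx⟩
        have hxρ : |x - x₀| < ρ := by
          rw [abs_sub_lt_iff]
          refine ⟨by linarith [hx.2, hδρ N], by linarith [hx.1, hδρ N]⟩
        have := hlin x hxρ
        rw [this] at hT
        constructor
        · have := hT.1
          have : -(δ N) ≤ s * (x - x₀) := by linarith
          have h2 : -(δ N) / s ≤ x - x₀ := by
            rw [div_le_iff₀ hs0] at *
            nlinarith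
          rw [neg_div] at h2
          linarith
        · have := hT.2
          have h1 : s * (x - x₀) ≤ δ N := by linarith
          have h2 : x - x₀ ≤ δ N / s := by
            rw [le_div_iff₀ hs0]; nlinarith
          linarith
      · intro hx
        have hds : δ N / s < δ N := by
          rw [div_lt_iff₀ hs0]; nlinarith
        have hxρ : |x - x₀| < ρ := by
          rw [abs_sub_lt_iff]
          constructor
          · linarith [hx.2, hδρ N]
          · linarith [hx.1, hδρ N]
        have hTl := hlin x hxρ
        refine ⟨?_, by constructor <;> [linarith [hx.1]; linarith [hx.2]]⟩
        rw [hTl]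
        have h1 : x - x₀ ≤ δ N / s := by linarith [hx.2]
        have h2 : -(δ N / s) ≤ x - x₀ := by linarith [hx.1]
        have hss : s * (δ N / s) = δ N := mul_div_cancel₀ _ (ne_of_gt hs0)
        have hm1 : s * (x - x₀) ≤ s * (δ N / s) := mul_le_mul_of_nonneg_left h1 (le_of_lt hs0)
        have hm2 : s * (-(δ N / s)) ≤ s * (x - x₀) := mul_le_mul_of_nonneg_left h2 (le_of_lt hs0)
        have hss2 : s * (-(δ N / s)) = -(δ N) := by rw [mul_neg, hss]
        constructor <;> linarith
    rw [hseteq, Real.volume_Icc, Real.volume_Icc]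
    have e1 : x₀ + δ N / s - (x₀ - δ N / s) = 2 * δ N / s := by ring
    have e2 : x₀ + δ N - (x₀ - δ N) = 2 * δ N := by ring
    rw [e1, e2, ENNReal.toReal_ofReal (by positivity), ENNReal.toReal_ofReal (by positivity)]
    field_simp
end

section
/- Let (f_k) be nonnegative measurable functions on a probability space (Ω, B, μ), and let (g_k), (h_k) be bounded real sequences with 0 ≤ g_k ≤ h_k. Suppose there is C > 0 such that for all m < n, ∫ (Σ_{m<k≤n} (f_k(x) − g_k))² dμ(x) ≤ C Σ_{m<k≤n} h_k. If Θ(n) := Σ_{1≤k≤n} h_k → ∞ and Σ_{1≤k≤n} g_k / Θ(n) is bounded below by a positive constant, then for μ-a.e. x, Σ_{1≤k≤n} f_k(x) / Σ_{1≤k≤n} g_k → 1 as n → ∞. -/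
open MeasureTheory Filter

set_option maxHeartbeats 1000000 in
/-- Sprindzuk-type strong law: nonnegative measurable `f_k` with second moments of partial
sums of `f_k − g_k` controlled by `C Σ h_k` (where `0 ≤ g_k ≤ h_k` are bounded), with
`Θ(n) = Σ_{k≤n} h_k → ∞` and `Σ_{k≤n} g_k / Θ(n)` eventually bounded below by `c > 0`,
satisfy `Σ_{k≤n} f_k / Σ_{k≤n} g_k → 1` almost surely. -/
theorem stmt16 {Ω : Type*} [MeasurableSpace Ω] (μ : Measure Ω) [IsProbabilityMeasure μ]
    (f : ℕ → Ω → ℝ) (g h : ℕ → ℝ)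
    (hfmeas : ∀ k, Measurable (f k)) (hfnn : ∀ k x, 0 ≤ f k x)
    (hbd : ∃ B : ℝ, ∀ k, h k ≤ B)
    (hgh : ∀ k, 0 ≤ g k ∧ g k ≤ h k)
    (C : ℝ) (hC : 0 < C)
    (hintsq : ∀ m n : ℕ,
      Integrable (fun x => (∑ k ∈ Finset.Ioc m n, (f k x - g k)) ^ 2) μ)
    (hmom : ∀ m n : ℕ, m < n →
      ∫ x, (∑ k ∈ Finset.Ioc m n, (f k x - g k)) ^ 2 ∂μ ≤ C * ∑ k ∈ Finset.Ioc m n, h k)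
    (hΘ : Tendsto (fun n => ∑ k ∈ Finset.Icc 1 n, h k) atTop atTop)
    (c : ℝ) (hc : 0 < c)
    (hratio : ∀ᶠ n in atTop,
      c ≤ (∑ k ∈ Finset.Icc 1 n, g k) / ∑ k ∈ Finset.Icc 1 n, h k) :
    ∀ᵐ x ∂μ, Tendsto
      (fun n => (∑ k ∈ Finset.Icc 1 n, f k x) / ∑ k ∈ Finset.Icc 1 n, g k)
      atTop (nhds 1) := by
  classical
  obtain ⟨B, hB⟩ := hbd
  have hg0 : ∀ k, 0 ≤ g k := fun k => (hgh k).1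
  have hh0 : ∀ k, 0 ≤ h k := fun k => (hg0 k).trans (hgh k).2
  have hB0 : 0 ≤ B := (hh0 0).trans (hB 0)
  set Θ : ℕ → ℝ := fun n => ∑ k ∈ Finset.Icc 1 n, h k with hΘdef
  set G : ℕ → ℝ := fun n => ∑ k ∈ Finset.Icc 1 n, g k with hGdef
  set D : ℕ → Ω → ℝ := fun n x => ∑ k ∈ Finset.Icc 1 n, (f k x - g k) with hDdef
  have hΘ' : Tendsto Θ atTop atTop := by rw [hΘdef]; exact hΘ
  have hΘ0 : Θ 0 = 0 := by simp [hΘdef]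
  have hΘnn : ∀ n, 0 ≤ Θ n := by
    intro n; rw [hΘdef]; exact Finset.sum_nonneg fun k _ => hh0 k
  have hΘmono : Monotone Θ := by
    intro a b hab
    rw [hΘdef]
    exact Finset.sum_le_sum_of_subset_of_nonneg (Finset.Icc_subset_Icc_right hab)
      (fun k _ _ => hh0 k)
  have hGmono : Monotone G := by
    intro a b hab
    rw [hGdef]
    exact Finset.sum_le_sum_of_subset_of_nonneg (Finset.Icc_subset_Icc_right hab)
      (fun k _ _ => hg0 k)
  have hIccIoc : ∀ n : ℕ, Finset.Icc 1 n = Finset.Ioc 0 n := fun n => Finset.Icc_add_one_left_eq_Ioc 0 n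
  -- additive decompositions
  have hΘIoc : ∀ a b : ℕ, a ≤ b → Θ a + ∑ k ∈ Finset.Ioc a b, h k = Θ b := by
    intro a b hab
    rw [hΘdef]; simp only [hIccIoc]
    exact Finset.sum_Ioc_consecutive h (Nat.zero_le a) hab
  have hGIoc : ∀ a b : ℕ, a ≤ b → G a + ∑ k ∈ Finset.Ioc a b, g k = G b := by
    intro a b hab
    rw [hGdef]; simp only [hIccIoc]
    exact Finset.sum_Ioc_consecutive g (Nat.zero_le a) hab
  -- the subsequence m j
  have hex : ∀ j : ℕ, ∃ n, ((j : ℝ)) ^ 2 ≤ Θ n := fun j =>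
    (hΘ'.eventually_ge_atTop ((j : ℝ) ^ 2)).exists
  set m : ℕ → ℕ := fun j => Nat.find (hex j) with hmdef
  have hm1 : ∀ j : ℕ, ((j : ℝ)) ^ 2 ≤ Θ (m j) := fun j => Nat.find_spec (hex j)
  have hm2 : ∀ (j n : ℕ), ((j : ℝ)) ^ 2 ≤ Θ n → m j ≤ n := fun j n hn => Nat.find_min' (hex j) hn
  have hm3 : ∀ (j n : ℕ), Θ n < (j : ℝ) ^ 2 → n < m j := by
    intro j n hn
    by_contra hcon
    push_neg at hcon
    exact absurd ((hm1 j).trans (hΘmono hcon)) (not_le.mpr hn)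
  have hmpos : ∀ j : ℕ, 1 ≤ j → 1 ≤ m j := by
    intro j hj
    have hj' : (1 : ℝ) ≤ (j : ℝ) := by exact_mod_cast hj
    have : Θ 0 < (j : ℝ) ^ 2 := by rw [hΘ0]; nlinarith
    exact hm3 j 0 this
  have hmub : ∀ j : ℕ, 1 ≤ j → Θ (m j) ≤ (j : ℝ) ^ 2 + B := by
    intro j hj
    obtain ⟨p, hp⟩ : ∃ p, m j = p + 1 := ⟨m j - 1, (Nat.succ_pred_eq_of_pos (hmpos j hj)).symm⟩
    have hlt : Θ p < (j : ℝ) ^ 2 := by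
      by_contra hcon
      push_neg at hcon
      have := hm2 j p hcon
      omega
    have hsum : Θ (p + 1) = Θ p + h (p + 1) := by
      rw [hΘdef]
      exact Finset.sum_Icc_succ_top (Nat.succ_le_succ (Nat.zero_le p)) h
    rw [hp, hsum]
    linarith [hB (p + 1)]
  -- integrability / moment bounds for D
  have hDmeas : ∀ n, Measurable (D n) := by
    intro n
    rw [hDdef]
    exact Finset.measurable_sum _ (fun k _ => (hfmeas k).sub measurable_const)
  have hDint : ∀ n, Integrable (fun x => (D n x) ^ 2) μ := by
    intro n
    have := hintsq 0 n
    simp only [hDdef, ← hIccIoc] at this ⊢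
    exact this
  have hDmom : ∀ n, 1 ≤ n → ∫ x, (D n x) ^ 2 ∂μ ≤ C * Θ n := by
    intro n hn
    have := hmom 0 n hn
    simp only [hDdef, hΘdef, ← hIccIoc] at this ⊢
    exact this
  -- the normalized quantities
  set ε : ℕ → Ω → ℝ := fun j x => D (m j) x / Θ (m j) with hεdef
  set F : ℕ → Ω → ENNReal := fun j x => ENNReal.ofReal ((ε j x) ^ 2) with hFdef
  have hεmeas : ∀ j, Measurable (ε j) := by
    intro j; rw [hεdef]; exact (hDmeas (m j)).div_const _
  have hFmeas : ∀ j, Measurable (F j) := by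
    intro j; rw [hFdef]
    exact ENNReal.measurable_ofReal.comp ((hεmeas j).pow_const 2)
  have hFint : ∀ j, ∫⁻ x, F j x ∂μ ≤ ENNReal.ofReal (C / (j : ℝ) ^ 2) := by
    intro j
    rcases Nat.eq_zero_or_pos j with rfl | hj
    · have hm0 : m 0 = 0 := Nat.le_zero.mp (hm2 0 0 (by simp [hΘ0]))
      have : ∀ x : Ω, F 0 x = 0 := by
        intro x
        rw [hFdef, hεdef]
        simp [hm0, hDdef]
      simp [this]
    · have hjr : (1 : ℝ) ≤ (j : ℝ) := by exact_mod_cast hj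
      have hΘpos : 0 < Θ (m j) := lt_of_lt_of_le (by nlinarith) (hm1 j)
      have hint2 : Integrable (fun x => (ε j x) ^ 2) μ := by
        rw [hεdef]
        simp only [div_pow]
        exact (hDint (m j)).div_const _
      have heq : ∫⁻ x, F j x ∂μ = ENNReal.ofReal (∫ x, (ε j x) ^ 2 ∂μ) := by
        rw [hFdef]
        exact (ofReal_integral_eq_lintegral_ofReal hint2
          (Eventually.of_forall fun x => sq_nonneg _)).symm
      rw [heq]
      apply ENNReal.ofReal_le_ofReal
      have heq2 : ∫ x, (ε j x) ^ 2 ∂μ = (∫ x, (D (m j) x) ^ 2 ∂μ) / (Θ (m j)) ^ 2 := by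
        rw [hεdef]
        simp only [div_pow]
        exact integral_div _ _
      rw [heq2]
      have h1 : ∫ x, (D (m j) x) ^ 2 ∂μ ≤ C * Θ (m j) := hDmom (m j) (hmpos j hj)
      have h2 : (j : ℝ) ^ 2 ≤ Θ (m j) := hm1 j
      have h0 : 0 ≤ ∫ x, (D (m j) x) ^ 2 ∂μ := integral_nonneg fun x => sq_nonneg _
      rw [div_le_div_iff₀ (by positivity) (by positivity)]
      nlinarith
  -- summability of the lintegrals
  have hsummable : Summable (fun j : ℕ => C / (j : ℝ) ^ 2) := by
    have h1 : Summable (fun n : ℕ => 1 / (n : ℝ) ^ 2) :=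
      Real.summable_one_div_nat_pow.mpr one_lt_two
    have := h1.mul_left C
    simpa [div_eq_mul_inv, mul_comm, mul_assoc, one_mul] using this
  have htsum : ∑' j, ∫⁻ x, F j x ∂μ ≠ ⊤ := by
    apply ne_top_of_le_ne_top _ (ENNReal.tsum_le_tsum hFint)
    rw [← ENNReal.ofReal_tsum_of_nonneg (fun j => by positivity) hsummable]
    exact ENNReal.ofReal_ne_top
  -- a.e. convergence of ε to 0
  have hae : ∀ᵐ x ∂μ, Tendsto (fun j => ε j x) atTop (nhds 0) := by
    have hmeasT : Measurable (fun x => ∑' j, F j x) := Measurable.ennreal_tsum hFmeas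
    have hlt : ∀ᵐ x ∂μ, (∑' j, F j x) < ⊤ := by
      apply ae_lt_top hmeasT
      rw [lintegral_tsum fun j => (hFmeas j).aemeasurable]
      exact htsum
    filter_upwards [hlt] with x hx
    have hsumm : Summable (fun j => (F j x).toReal) := ENNReal.summable_toReal hx.ne
    have heqv : ∀ j, (F j x).toReal = (ε j x) ^ 2 := by
      intro j; rw [hFdef]; exact ENNReal.toReal_ofReal (sq_nonneg _)
    have h2 : Tendsto (fun j => (ε j x) ^ 2) atTop (nhds 0) := by
      have := hsumm.tendsto_atTop_zero
      simpa [heqv] using this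
    have h3 : Tendsto (fun j => |ε j x|) atTop (nhds 0) := by
      have := (Real.continuous_sqrt.tendsto 0).comp h2
      simpa [Function.comp_def, Real.sqrt_sq_eq_abs] using this
    rw [tendsto_zero_iff_abs_tendsto_zero]
    simpa [Function.comp_def] using h3
  -- index function J
  set J : ℕ → ℕ := fun n => Nat.sqrt ⌊Θ n⌋₊ with hJdef
  have hJ1 : ∀ n, ((J n : ℝ)) ^ 2 ≤ Θ n := by
    intro n
    have h1 : (J n) ^ 2 ≤ ⌊Θ n⌋₊ := by rw [hJdef]; exact Nat.sqrt_le' _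
    calc ((J n : ℝ)) ^ 2 = ((J n ^ 2 : ℕ) : ℝ) := by push_cast; ring
      _ ≤ (⌊Θ n⌋₊ : ℝ) := by exact_mod_cast h1
      _ ≤ Θ n := Nat.floor_le (hΘnn n)
  have hJ2 : ∀ n, Θ n < ((J n : ℝ) + 1) ^ 2 := by
    intro n
    have h1 : ⌊Θ n⌋₊ < (J n + 1) ^ 2 := by
      rw [hJdef]
      have := Nat.lt_succ_sqrt ⌊Θ n⌋₊
      simpa [pow_two, Nat.succ_eq_add_one] using this
    have h2 : Θ n < (⌊Θ n⌋₊ : ℝ) + 1 := Nat.lt_floor_add_one _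
    have h3 : (⌊Θ n⌋₊ : ℝ) + 1 ≤ (((J n + 1) ^ 2 : ℕ) : ℝ) := by exact_mod_cast h1
    calc Θ n < (⌊Θ n⌋₊ : ℝ) + 1 := h2
      _ ≤ (((J n + 1) ^ 2 : ℕ) : ℝ) := h3
      _ = ((J n : ℝ) + 1) ^ 2 := by push_cast; ring
  have hJtop : Tendsto J atTop atTop := by
    rw [Filter.tendsto_atTop_atTop]
    intro b
    obtain ⟨N, hN⟩ := Filter.eventually_atTop.mp (hΘ'.eventually_ge_atTop ((b * b : ℕ) : ℝ))
    refine ⟨N, fun n hn => ?_⟩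
    have h1 : ((b * b : ℕ) : ℝ) ≤ Θ n := hN n hn
    have h2 : b * b ≤ ⌊Θ n⌋₊ := Nat.le_floor h1
    rw [hJdef]
    exact Nat.le_sqrt.mpr h2
  have hmn : ∀ n, m (J n) ≤ n := fun n => hm2 _ n (hJ1 n)
  have hnm : ∀ n, n < m (J n + 1) := by
    intro n
    apply hm3 _ n
    push_cast
    exact hJ2 n
  have hmm : ∀ j : ℕ, m j ≤ m (j + 1) := by
    intro j
    apply hm2
    calc ((j : ℝ)) ^ 2 ≤ ((j : ℝ) + 1) ^ 2 := by nlinarith [Nat.cast_nonneg (α := ℝ) j]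
      _ = (((j + 1 : ℕ)) : ℝ) ^ 2 := by push_cast; ring
      _ ≤ Θ (m (j + 1)) := hm1 (j + 1)
  -- now the pointwise argument
  filter_upwards [hae] with x hεx
  -- notation for partial sums of f
  have hADG : ∀ n, (∑ k ∈ Finset.Icc 1 n, f k x) - G n = D n x := by
    intro n
    rw [hGdef, hDdef]
    simp [Finset.sum_sub_distrib]
  have hAmono : ∀ a b : ℕ, a ≤ b →
      (∑ k ∈ Finset.Icc 1 a, f k x) ≤ ∑ k ∈ Finset.Icc 1 b, f k x := by
    intro a b hab
    exact Finset.sum_le_sum_of_subset_of_nonneg (Finset.Icc_subset_Icc_right hab)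
      (fun k _ _ => hfnn k x)
  -- the majorant
  set E : ℕ → ℝ := fun j => (4 + B) * (|ε j x| + |ε (j + 1) x|) + (3 + B) / (j : ℝ)
    with hEdef
  have hEten : Tendsto E atTop (nhds 0) := by
    have h1 : Tendsto (fun j => |ε j x|) atTop (nhds 0) := by simpa using hεx.abs
    have h2 : Tendsto (fun j => |ε (j + 1) x|) atTop (nhds 0) := by
      have := h1.comp (tendsto_add_atTop_nat 1)
      simpa [Function.comp_def] using this
    have h3 : Tendsto (fun j : ℕ => (3 + B) / (j : ℝ)) atTop (nhds 0) :=
      tendsto_const_div_atTop_nhds_zero_nat (3 + B)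
    have := (((h1.add h2).const_mul (4 + B)).add h3)
    rw [hEdef]
    simpa using this
  -- key estimate
  have hkey : ∀ n, 1 ≤ J n → |D n x / Θ n| ≤ E (J n) := by
    intro n hJn
    set j := J n with hj
    have hjr : (1 : ℝ) ≤ (j : ℝ) := by exact_mod_cast hJn
    have hθn : (j : ℝ) ^ 2 ≤ Θ n := hJ1 n
    have hθpos : 0 < Θ n := lt_of_lt_of_le (by nlinarith) hθn
    have hsq1 : (1 : ℝ) ≤ (j : ℝ) ^ 2 := by nlinarith only [hjr]
    have hBj : (0 : ℝ) ≤ B * ((j : ℝ) ^ 2 - 1) := mul_nonneg hB0 (by linarith only [hsq1])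
    have hΘm1 : 0 < Θ (m j) := lt_of_lt_of_le (by nlinarith) (hm1 j)
    have hΘm2 : 0 < Θ (m (j + 1)) := by
      have : ((j + 1 : ℕ) : ℝ) ^ 2 ≤ Θ (m (j + 1)) := hm1 (j + 1)
      have h1 : (0 : ℝ) < ((j + 1 : ℕ) : ℝ) ^ 2 := by positivity
      linarith
    -- ΔG bound
    have hΔGh : ∑ k ∈ Finset.Ioc (m j) (m (j + 1)), g k
        ≤ ∑ k ∈ Finset.Ioc (m j) (m (j + 1)), h k :=
      Finset.sum_le_sum fun k _ => (hgh k).2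
    have hΘdiff : ∑ k ∈ Finset.Ioc (m j) (m (j + 1)), h k = Θ (m (j + 1)) - Θ (m j) := by
      have := hΘIoc (m j) (m (j + 1)) (hmm j)
      linarith
    have hGdiff : G (m (j + 1)) - G (m j) = ∑ k ∈ Finset.Ioc (m j) (m (j + 1)), g k := by
      have := hGIoc (m j) (m (j + 1)) (hmm j)
      linarith
    have hub : Θ (m (j + 1)) ≤ ((j : ℝ) + 1) ^ 2 + B := by
      have := hmub (j + 1) (Nat.le_add_left 1 j)
      push_cast at this
      linarith
    have hΔG : G (m (j + 1)) - G (m j) ≤ 2 * (j : ℝ) + 1 + B := by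
      have h1 : G (m (j + 1)) - G (m j) ≤ Θ (m (j + 1)) - Θ (m j) := by
        rw [hGdiff, ← hΘdiff] at *
        linarith only [hΔGh]
      linarith only [h1, hub, hm1 j]
    -- D(m j) and D(m (j+1)) in terms of ε
    have hDm1 : D (m j) x = ε j x * Θ (m j) := by
      rw [hεdef]
      exact (div_mul_cancel₀ _ hΘm1.ne').symm
    have hDm2 : D (m (j + 1)) x = ε (j + 1) x * Θ (m (j + 1)) := by
      rw [hεdef]
      exact (div_mul_cancel₀ _ hΘm2.ne').symm
    -- sandwich
    have hup : D n x ≤ D (m (j + 1)) x + (G (m (j + 1)) - G (m j)) := by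
      have h1 : (∑ k ∈ Finset.Icc 1 n, f k x) ≤ ∑ k ∈ Finset.Icc 1 (m (j + 1)), f k x :=
        hAmono n (m (j + 1)) (le_of_lt (hnm n))
      have h2 : G (m j) ≤ G n := hGmono (hmn n)
      have h3 := hADG n
      have h4 := hADG (m (j + 1))
      linarith
    have hlo : D (m j) x - (G (m (j + 1)) - G (m j)) ≤ D n x := by
      have h1 : (∑ k ∈ Finset.Icc 1 (m j), f k x) ≤ ∑ k ∈ Finset.Icc 1 n, f k x :=
        hAmono (m j) n (hmn n)
      have h2 : G n ≤ G (m (j + 1)) := hGmono (le_of_lt (hnm n))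
      have h3 := hADG n
      have h4 := hADG (m j)
      linarith
    -- bounds on D(m j), D(m (j+1))
    have hd2 : D (m (j + 1)) x ≤ |ε (j + 1) x| * ((4 + B) * (j : ℝ) ^ 2) := by
      rw [hDm2]
      have s1 : ε (j + 1) x * Θ (m (j + 1)) ≤ |ε (j + 1) x| * Θ (m (j + 1)) :=
        mul_le_mul_of_nonneg_right (le_abs_self _) hΘm2.le
      have s2 : Θ (m (j + 1)) ≤ (4 + B) * (j : ℝ) ^ 2 := by
        linarith only [hub, sq_nonneg ((j : ℝ) - 1), hsq1, hBj]
      have s3 : |ε (j + 1) x| * Θ (m (j + 1)) ≤ |ε (j + 1) x| * ((4 + B) * (j : ℝ) ^ 2) :=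
        mul_le_mul_of_nonneg_left s2 (abs_nonneg _)
      linarith
    have hd1 : -D (m j) x ≤ |ε j x| * ((4 + B) * (j : ℝ) ^ 2) := by
      rw [hDm1]
      have s1 : -(ε j x * Θ (m j)) ≤ |ε j x| * Θ (m j) := by
        rw [neg_mul_eq_neg_mul]
        exact mul_le_mul_of_nonneg_right (neg_le_abs _) hΘm1.le
      have s2 : Θ (m j) ≤ (4 + B) * (j : ℝ) ^ 2 := by
        linarith only [hmub j hJn, hsq1, hBj]
      have s3 : |ε j x| * Θ (m j) ≤ |ε j x| * ((4 + B) * (j : ℝ) ^ 2) :=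
        mul_le_mul_of_nonneg_left s2 (abs_nonneg _)
      linarith
    -- the absolute bound
    have hΔG2 : G (m (j + 1)) - G (m j) ≤ (3 + B) * (j : ℝ) := by
      linarith only [hΔG, mul_nonneg hB0 (sub_nonneg.mpr hjr), hjr]
    have hΔG0 : 0 ≤ G (m (j + 1)) - G (m j) := by
      have := hGmono (hmm j)
      linarith
    have habs : |D n x| ≤ ((4 + B) * (|ε j x| + |ε (j + 1) x|)) * (j : ℝ) ^ 2
        + (3 + B) * (j : ℝ) := by
      rw [abs_le]
      constructor
      · have e1 : 0 ≤ |ε (j + 1) x| * ((4 + B) * (j : ℝ) ^ 2) := by positivity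
        linarith only [hlo, hd1, hΔG2, e1]
      · have e1 : 0 ≤ |ε j x| * ((4 + B) * (j : ℝ) ^ 2) := by positivity
        linarith only [hup, hd2, hΔG2, e1]
    -- divide
    have hdiv1 : |D n x / Θ n| = |D n x| / Θ n := by
      rw [abs_div, abs_of_pos hθpos]
    rw [hdiv1]
    have hdiv2 : |D n x| / Θ n ≤ |D n x| / (j : ℝ) ^ 2 :=
      div_le_div_of_nonneg_left (abs_nonneg _) (by positivity) hθn
    have hjne : (j : ℝ) ≠ 0 := by linarith
    have hdiv3 : |D n x| / (j : ℝ) ^ 2 ≤ E j := by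
      rw [div_le_iff₀ (by positivity)]
      have hEexp : E j = (4 + B) * (|ε j x| + |ε (j + 1) x|) + (3 + B) / (j : ℝ) := by
        rw [hEdef]
      have hfield : ((4 + B) * (|ε j x| + |ε (j + 1) x|) + (3 + B) / (j : ℝ)) * (j : ℝ) ^ 2
          = ((4 + B) * (|ε j x| + |ε (j + 1) x|)) * (j : ℝ) ^ 2 + (3 + B) * (j : ℝ) := by
        field_simp
      rw [hEexp, hfield]
      exact habs
    linarith
  -- conclude : D n x / Θ n → 0
  have hDΘ : Tendsto (fun n => D n x / Θ n) atTop (nhds 0) := by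
    rw [tendsto_zero_iff_abs_tendsto_zero]
    apply squeeze_zero' (Eventually.of_forall fun n => abs_nonneg _) _ (hEten.comp hJtop)
    filter_upwards [hJtop.eventually_ge_atTop 1] with n hn
    exact hkey n hn
  -- final step
  have hconv : Tendsto (fun n => (∑ k ∈ Finset.Icc 1 n, f k x) / G n) atTop (nhds 1) := by
    rw [← tendsto_sub_nhds_zero_iff]
    rw [tendsto_zero_iff_abs_tendsto_zero]
    have hmaj : Tendsto (fun n => (1 / c) * |D n x / Θ n|) atTop (nhds 0) := by
      have := (hDΘ.abs).const_mul (1 / c)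
      simpa using this
    apply squeeze_zero' (Eventually.of_forall fun n => abs_nonneg _) _ hmaj
    have hratio' : ∀ᶠ n in atTop, c ≤ G n / Θ n := by
      have : ∀ n, ((∑ k ∈ Finset.Icc 1 n, g k) / ∑ k ∈ Finset.Icc 1 n, h k) = G n / Θ n := by
        intro n; rw [hGdef, hΘdef]
      filter_upwards [hratio] with n hn
      rw [← this n]
      exact hn
    filter_upwards [hratio', hΘ'.eventually_ge_atTop 1] with n hrn hθ1
    have hθpos : 0 < Θ n := lt_of_lt_of_le one_pos hθ1
    have hcg : c * Θ n ≤ G n := (le_div_iff₀ hθpos).mp hrn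
    have hGpos : 0 < G n := lt_of_lt_of_le (by positivity) hcg
    have heq : (∑ k ∈ Finset.Icc 1 n, f k x) / G n - 1 = D n x / G n := by
      rw [← hADG n]
      field_simp
    rw [heq, abs_div, abs_of_pos hGpos]
    have h1 : |D n x| / G n ≤ |D n x| / (c * Θ n) :=
      div_le_div_of_nonneg_left (abs_nonneg _) (by positivity) hcg
    have h2 : |D n x| / (c * Θ n) = (1 / c) * |D n x / Θ n| := by
      rw [abs_div, abs_of_pos hθpos]
      field_simp
    linarith
  rw [hGdef] at hconv
  exact hconv
end

section
/- Let (Ω, m, σ) be ergodic with σ invertible, and suppose τ_{ω,N} : X → ℕ ∪ {∞} and measures μ_{ω} satisfy: (i) μ_ω(τ_{ω,N} > N) = μ_{σω}(X_{σω,N−1,N}) via equivariance, and (ii) the holes satisfy μ_{ω}(H_{ω,N}) = (t_ω + ξ_{ω,N})/N with t ∈ L^∞(m), t_ω > 0, |ξ_{ω,N}| ≤ W, ξ_{ω,N} → 0 a.e. Then for m-a.e. ω, |μ_ω(τ_{ω,N} μ_ω(H_{ω,N}) > t_ω + ξ_{ω,N}) − μ_ω(τ_{ω,N} μ_ω(H_{ω,N})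 > t_ω)| → 0 as N → ∞, using the bound that the symmetric difference of the two events is covered by at most ⌈|ξ_{ω,N}| / μ_ω(H_{ω,N})⌉ preimages of holes each of measure at most (‖t‖_∞ + W)/N. -/
/-!
Moving the threshold of the event `τ_{ω,N} · μ_ω(H_{ω,N}) > s` between `t_ω` and
`t_ω + ξ_{ω,N}` only changes it at the roughly
`|ξ_{ω,N}| / μ_ω(H_{ω,N}) ≈ N |ξ_{ω,N}| / t_ω` times `j` in between. By equivariance the
pulled-back hole `T_ω^{-j} H_{σ^j ω, N}` has `μ_ω`-measure
`μ_{σ^j ω}(H_{σ^j ω, N}) ≤ (tb + W)/N`, and this holds along a.e. orbit since `σ` preserves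
`m`. So the two probabilities differ by at most
`|ξ_{ω,N}| (tb + W) / (t_ω + ξ_{ω,N}) + (tb + W)/N → 0`.
-/

open MeasureTheory Filter

/-- The cocycle of fiber maps: `iterT σ T n ω = T_{σ^{n-1}ω} ∘ ⋯ ∘ T_{σω} ∘ T_ω`. -/
def iterT {Ω X : Type*} (σ : Ω → Ω) (T : Ω → X → X) : ℕ → Ω → X → X
  | 0, _, x => x
  | n + 1, ω, x => iterT σ T n (σ ω) (T ω x)

section Cocycle

variable {Ω X : Type*} [MeasurableSpace Ω] [MeasurableSpace X]
  {σ : Ω → Ω} {T : Ω → X → X}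

theorem measurable_iterT (hT : Measurable fun p : Ω × X => T p.1 p.2) (n : ℕ) (ω : Ω) :
    Measurable (iterT σ T n ω) := by
  induction n generalizing ω with
  | zero => exact measurable_id
  | succ n ih => exact (ih (σ ω)).comp (hT.comp measurable_prodMk_left)

theorem map_iterT {μ : Ω → Measure X} (hT : Measurable fun p : Ω × X => T p.1 p.2)
    (hequiv : ∀ ω, (μ ω).map (T ω) = μ (σ ω)) (n : ℕ) (ω : Ω) :
    (μ ω).map (iterT σ T n ω) = μ (σ^[n] ω) := by
  induction n generalizing ω with
  | zero => exact Measure.map_id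
  | succ n ih =>
    have hTω : Measurable (T ω) := hT.comp measurable_prodMk_left
    rw [show iterT σ T (n + 1) ω = iterT σ T n (σ ω) ∘ T ω from rfl,
      ← Measure.map_map (measurable_iterT hT n (σ ω)) hTω,
      hequiv, ih, Function.iterate_succ_apply]

theorem measureReal_preimage_iterT {μ : Ω → Measure X}
    (hT : Measurable fun p : Ω × X => T p.1 p.2)
    (hequiv : ∀ ω, (μ ω).map (T ω) = μ (σ ω)) (n : ℕ) (ω : Ω) {S : Set X}
    (hS : MeasurableSet S) :
    (μ ω).real (iterT σ T n ω ⁻¹' S) = (μ (σ^[n] ω)).real S := by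
  rw [measureReal_def, measureReal_def, ← Measure.map_apply (measurable_iterT hT n ω) hS,
    map_iterT hT hequiv]

end Cocycle

theorem MeasureTheory.MeasurePreserving.ae_forall_iterate {Ω : Type*} [MeasurableSpace Ω]
    {m : Measure Ω} {σ : Ω → Ω} (hσ : MeasurePreserving σ m m) {P : Ω → Prop}
    (hP : ∀ᵐ ω ∂m, P ω) : ∀ᵐ ω ∂m, ∀ j, P (σ^[j] ω) :=
  ae_all_iff.2 fun j => (hσ.iterate j).quasiMeasurePreserving.ae hP

theorem natCast_card_Ioc_floor_le {u v : ℝ} (hu : 0 ≤ u) (huv : u ≤ v) :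
    ((Finset.Ioc ⌊u⌋₊ ⌊v⌋₊).card : ℝ) ≤ v - u + 1 := by
  rw [Nat.card_Ioc]
  rcases le_total ⌊u⌋₊ ⌊v⌋₊ with h | h
  · rw [Nat.cast_sub h]
    linarith [Nat.floor_le (hu.trans huv), Nat.lt_floor_add_one u]
  · rw [Nat.sub_eq_zero_of_le h]
    push_cast
    linarith

theorem tendsto_abs_mul_div_add_div_natCast {ξ : ℕ → ℝ} (hξ : Tendsto ξ atTop (nhds 0))
    {t : ℝ} (ht : t ≠ 0) (C : ℝ) :
    Tendsto (fun N : ℕ => |ξ N| * C / (t + ξ N) + C / N) atTop (nhds 0) := by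
  have hden : Tendsto (fun N => t + ξ N) atTop (nhds t) := by
    simpa using tendsto_const_nhds.add hξ
  simpa using ((hξ.abs.mul_const C).div hden ht).add (tendsto_const_div_atTop_nhds_zero_nat C)

section NotHitUntil

variable {X : Type*}

/-- The event `τ · a > s`, where `τ` is the first time `j ≥ 1` with the point in `E j`. -/
def notHitUntil (E : ℕ → Set X) (a s : ℝ) : Set X :=
  {x | ∀ j : ℕ, 1 ≤ j → (j : ℝ) * a ≤ s → x ∉ E j}

theorem notHitUntil_antitone (E : ℕ → Set X) (a : ℝ) : Antitone (notHitUntil E a) :=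
  fun _ _ hss' _ hx j hj hja => hx j hj (hja.trans hss')

theorem notHitUntil_diff_subset (E : ℕ → Set X) {a : ℝ} (ha : 0 < a) (s s' : ℝ) :
    notHitUntil E a s \ notHitUntil E a s' ⊆
      ⋃ j ∈ Finset.Ioc ⌊s / a⌋₊ ⌊s' / a⌋₊, E j := by
  rintro x ⟨hx, hx'⟩
  simp only [notHitUntil, Set.mem_ofPred_eq, not_forall, not_not] at hx'
  obtain ⟨j, hj, hjs', hxj⟩ := hx'
  have hjs : s < j * a := lt_of_not_ge fun hjs => hx j hj hjs hxj
  refine Set.mem_biUnion (Finset.mem_Ioc.2 ⟨?_, ?_⟩) hxj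
  · exact (Nat.floor_lt' (by omega)).2 ((div_lt_iff₀ ha).2 hjs)
  · exact Nat.le_floor ((le_div_iff₀ ha).2 hjs')

theorem abs_measureReal_notHitUntil_sub_le [MeasurableSpace X] (ν : Measure X)
    [IsFiniteMeasure ν] (E : ℕ → Set X) {a C s s' : ℝ} (ha : 0 < a) (hs : 0 ≤ s)
    (hs' : 0 ≤ s') (hE : ∀ j, ν.real (E j) ≤ C) :
    |ν.real (notHitUntil E a s) - ν.real (notHitUntil E a s')| ≤ (|s - s'| / a + 1) * C := by
  wlog hss' : s ≤ s' generalizing s s'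
  · rw [abs_sub_comm, abs_sub_comm s]
    exact this hs' hs (le_of_not_ge hss')
  set A := notHitUntil E a s
  set B := notHitUntil E a s'
  set K := Finset.Ioc ⌊s / a⌋₊ ⌊s' / a⌋₊
  have hBA : B ⊆ A := notHitUntil_antitone E a hss'
  have hA : ν.real A ≤ ν.real B + ν.real (A \ B) := by
    calc ν.real A = ν.real (B ∪ A \ B) := by rw [Set.union_sdiff_cancel hBA]
      _ ≤ ν.real B + ν.real (A \ B) := measureReal_union_le _ _
  have hAB : ν.real (A \ B) ≤ K.card * C := by
    calc ν.real (A \ B) ≤ ν.real (⋃ j ∈ K, E j) :=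
          measureReal_mono (notHitUntil_diff_subset E ha s s') (measure_ne_top _ _)
      _ ≤ ∑ j ∈ K, ν.real (E j) := measureReal_biUnion_finset_le _ _
      _ ≤ K.card * C := by simpa only [Finset.sum_const, nsmul_eq_mul] using
          Finset.sum_le_sum fun j _ => hE j
  have hK : (K.card : ℝ) ≤ s' / a - s / a + 1 :=
    natCast_card_Ioc_floor_le (div_nonneg hs ha.le) (div_le_div_of_nonneg_right hss' ha.le)
  have hC : 0 ≤ C := measureReal_nonneg.trans (hE 0)
  rw [abs_of_nonneg (sub_nonneg.2 (measureReal_mono hBA)), abs_sub_comm,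
    abs_of_nonneg (sub_nonneg.2 hss'), sub_div]
  nlinarith

end NotHitUntil

theorem stmt18_general {Ω X : Type*} [MeasurableSpace Ω] [MeasurableSpace X]
    (m : Measure Ω) [IsProbabilityMeasure m]
    (σ : Ω → Ω) (hσ : Ergodic σ m)
    (T : Ω → X → X) (hT : Measurable fun p : Ω × X => T p.1 p.2)
    (μ : Ω → Measure X) (hμprob : ∀ ω, IsProbabilityMeasure (μ ω))
    (hequiv : ∀ ω, Measure.map (T ω) (μ ω) = μ (σ ω))
    (H : Ω → ℕ → Set X) (hH : ∀ ω N, MeasurableSet (H ω N))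
    (t : Ω → ℝ) (ξ : Ω → ℕ → ℝ) (tb W : ℝ)
    (ht : ∀ᵐ ω ∂m, 0 < t ω ∧ t ω ≤ tb)
    (hξb : ∀ᵐ ω ∂m, ∀ N, |ξ ω N| ≤ W)
    (hξlim : ∀ᵐ ω ∂m, Tendsto (fun N => ξ ω N) atTop (nhds 0))
    (hscale : ∀ᵐ ω ∂m, ∀ N : ℕ, 1 ≤ N →
      (μ ω (H ω N)).toReal = (t ω + ξ ω N) / N) :
    ∀ᵐ ω ∂m, Tendsto (fun N : ℕ =>
      |(μ ω {x : X | ∀ j : ℕ, 1 ≤ j →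
          (j : ℝ) * (μ ω (H ω N)).toReal ≤ t ω + ξ ω N →
          iterT σ T j ω x ∉ H (σ^[j] ω) N}).toReal -
        (μ ω {x : X | ∀ j : ℕ, 1 ≤ j →
          (j : ℝ) * (μ ω (H ω N)).toReal ≤ t ω →
          iterT σ T j ω x ∉ H (σ^[j] ω) N}).toReal|)
      atTop (nhds 0) := by
  have hhole : ∀ᵐ ω ∂m, ∀ N : ℕ, 1 ≤ N → (μ ω).real (H ω N) ≤ (tb + W) / N := by
    filter_upwards [ht, hξb, hscale] with ω htω hξω hscaleω N hN
    rw [measureReal_def, hscaleω N hN]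
    gcongr
    exacts [htω.2, (le_abs_self _).trans (hξω N)]
  filter_upwards [hσ.toMeasurePreserving.ae_forall_iterate hhole, ht, hscale, hξlim]
    with ω hholeω htω hscaleω hlim
  refine squeeze_zero' (Eventually.of_forall fun N => abs_nonneg _) ?_
    (tendsto_abs_mul_div_add_div_natCast hlim htω.1.ne' (tb + W))
  filter_upwards [hlim.eventually_const_lt (neg_lt_zero.2 htω.1), eventually_ge_atTop 1]
    with N hξN hN
  have ha : 0 < (μ ω (H ω N)).toReal := by
    rw [hscaleω N hN]
    exact div_pos (by linarith) (by exact_mod_cast hN)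
  have := hμprob ω
  calc _ ≤ (|t ω + ξ ω N - t ω| / (μ ω (H ω N)).toReal + 1) * ((tb + W) / N) :=
        abs_measureReal_notHitUntil_sub_le (μ ω) (fun j => iterT σ T j ω ⁻¹' H (σ^[j] ω) N)
          ha (by linarith) htω.1.le fun j => by
            rw [measureReal_preimage_iterT hT hequiv j ω (hH _ _)]
            exact hholeω j N hN
    _ = |ξ ω N| * (tb + W) / (t ω + ξ ω N) + (tb + W) / N := by
        rw [hscaleω N hN, add_sub_cancel_left]
        field_simp

/-- Threshold-stability of rescaled hitting times: with equivariant measures `μ_ω`, holes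
scaling as `μ_ω(H_{ω,N}) = (t_ω + ξ_{ω,N})/N` with `t ∈ L^∞`, `t_ω > 0`, `|ξ_{ω,N}| ≤ W`,
`ξ_{ω,N} → 0`, the difference of the probabilities that the rescaled first hitting time
`τ_{ω,N} · μ_ω(H_{ω,N})` exceeds `t_ω + ξ_{ω,N}` or exceeds `t_ω` tends to `0` a.e.
(the event `τ·a > s` being encoded as "no hit at any time `j ≥ 1` with `j·a ≤ s`"). -/
theorem stmt18 {Ω X : Type*} [MeasurableSpace Ω] [MeasurableSpace X]
    (m : Measure Ω) [IsProbabilityMeasure m]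
    (σ σinv : Ω → Ω) (hσ : Ergodic σ m)
    (hinv1 : Function.LeftInverse σinv σ) (hinv2 : Function.RightInverse σinv σ)
    (T : Ω → X → X) (hT : Measurable fun p : Ω × X => T p.1 p.2)
    (μ : Ω → Measure X) (hμprob : ∀ ω, IsProbabilityMeasure (μ ω))
    (hequiv : ∀ ω, Measure.map (T ω) (μ ω) = μ (σ ω))
    (H : Ω → ℕ → Set X) (hH : ∀ ω N, MeasurableSet (H ω N))
    (t : Ω → ℝ) (ξ : Ω → ℕ → ℝ) (tb W : ℝ)
    (ht : ∀ᵐ ω ∂m, 0 < t ω ∧ t ω ≤ tb)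
    (hξb : ∀ᵐ ω ∂m, ∀ N, |ξ ω N| ≤ W)
    (hξlim : ∀ᵐ ω ∂m, Tendsto (fun N => ξ ω N) atTop (nhds 0))
    (hscale : ∀ᵐ ω ∂m, ∀ N : ℕ, 1 ≤ N →
      (μ ω (H ω N)).toReal = (t ω + ξ ω N) / N) :
    ∀ᵐ ω ∂m, Tendsto (fun N : ℕ =>
      |(μ ω {x : X | ∀ j : ℕ, 1 ≤ j →
          (j : ℝ) * (μ ω (H ω N)).toReal ≤ t ω + ξ ω N →
          iterT σ T j ω x ∉ H (σ^[j] ω) N}).toReal -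
        (μ ω {x : X | ∀ j : ℕ, 1 ≤ j →
          (j : ℝ) * (μ ω (H ω N)).toReal ≤ t ω →
          iterT σ T j ω x ∉ H (σ^[j] ω) N}).toReal|)
      atTop (nhds 0) :=
  stmt18_general m σ hσ T hT μ hμprob hequiv H hH t ξ tb W ht hξb hξlim hscale
end
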